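/- arXiv:1804.07696 — 5 statements merged into one kernel-verified Lean document; each statement's English description precedes it below -/
import Mathlib

section
/- Let δ > 0, n ∈ ℕ, and let X be a random variable taking values in {0,1,…,n} with probability generating function P whose roots ζ all satisfy |1 − ζ| > δ and |ζ| ≠ 1. Then there exists ε > 0 such that for all θ ∈ ℂ with |θ| < ε, P(e^{iθ}) = exp( −Σ_{m≥1} ((iθ)^m/m!)·(A_m + B_m) + R·iθ ), where A_m = Σ_{k≥1} T_k k^{m−1}, B_m = (−1)^m Σ_{k≥1} S_k k^{m−1}, T_k = Σ_{ζ root of P, |ζ| > 1} ζ^{-k}, S_k = Σ_{ζ root of P, |ζ| < 1} ζ^k, and R is the number of roots of P with |ζ| < 1 counted with multiplicity; moreover ε may be chosen so that the defining double sum Σ_{m≥1} Σ_{k≥1} converges absolutely, uniformly on {|θ| < ε}. -/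
open MeasureTheory ProbabilityTheory Polynomial Filter Topology
open scoped Classical

/-- The probability generating function of a random variable `X` taking values in
`{0, 1, …, n}`, as a polynomial over `ℂ`:  `P(z) = ∑_{k=0}^n ℙ(X = k) z^k`. -/
noncomputable def pgf {Ω : Type*} [MeasurableSpace Ω] (μ : Measure Ω) (X : Ω → ℝ) (n : ℕ) :
    Polynomial ℂ :=
  ∑ k ∈ Finset.range (n + 1),
    Polynomial.C (((μ {ω | X ω = (k : ℝ)}).toReal : ℝ) : ℂ) * Polynomial.X ^ k

/-- `T_k = ∑_{ζ : |ζ| > 1} ζ^{-k}`, summed over roots of `P` counted with multiplicity. -/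
noncomputable def Tk (P : Polynomial ℂ) (k : ℕ) : ℂ :=
  ((P.roots.filter (fun ζ => 1 < ‖ζ‖)).map (fun ζ => (ζ ^ k)⁻¹)).sum

/-- `S_k = ∑_{ζ : |ζ| < 1} ζ^k`, summed over roots of `P` counted with multiplicity. -/
noncomputable def Sk (P : Polynomial ℂ) (k : ℕ) : ℂ :=
  ((P.roots.filter (fun ζ => ‖ζ‖ < 1)).map (fun ζ => ζ ^ k)).sum

/-- `R`, the number of roots of `P` of modulus less than one, with multiplicity. -/
noncomputable def Rnum (P : Polynomial ℂ) : ℕ :=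
  Multiset.card (P.roots.filter (fun ζ => ‖ζ‖ < 1))

/-- `A_m = ∑_{k ≥ 1} T_k k^{m-1}` (here the index `k ≥ 1` is written as `k + 1`). -/
noncomputable def Am (P : Polynomial ℂ) (m : ℕ) : ℂ :=
  ∑' k : ℕ, Tk P (k + 1) * ((k : ℂ) + 1) ^ (m - 1)

/-- `B_m = (-1)^m ∑_{k ≥ 1} S_k k^{m-1}` (here the index `k ≥ 1` is written as `k + 1`). -/
noncomputable def Bm (P : Polynomial ℂ) (m : ℕ) : ℂ :=
  (-1) ^ m * ∑' k : ℕ, Sk P (k + 1) * ((k : ℂ) + 1) ^ (m - 1)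

set_option maxHeartbeats 2000000

section Helpers
open Complex
lemma hasSum_exp_sub_one_real (x : ℝ) :
    HasSum (fun m : ℕ => x ^ (m + 1) / ((m + 1).factorial : ℝ)) (Real.exp x - 1) := by
  have h : HasSum (fun n : ℕ => x ^ n / (n.factorial : ℝ)) (Real.exp x) := by
    rw [Real.exp_eq_exp_ℝ]
    exact NormedSpace.expSeries_div_hasSum_exp x
  have := (hasSum_nat_add_iff' (f := fun n : ℕ => x ^ n / (n.factorial : ℝ)) 1).mpr h
  simpa using this

lemma master_summable {r ε : ℝ} (hr0 : 0 < r) (hε : 0 < ε) (hs : r * Real.exp ε < 1) :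
    Summable (fun p : ℕ × ℕ =>
      ε ^ (p.1 + 1) * ((p.2 : ℝ) + 1) ^ p.1 * r ^ (p.2 + 1) / ((p.1 + 1).factorial : ℝ)) := by
  -- first the swapped version, fibered over k = p.1
  have hq : Summable (fun q : ℕ × ℕ =>
      ε ^ (q.2 + 1) * ((q.1 : ℝ) + 1) ^ q.2 * r ^ (q.1 + 1) / ((q.2 + 1).factorial : ℝ)) := by
    have hnn : ∀ q : ℕ × ℕ, 0 ≤
        ε ^ (q.2 + 1) * ((q.1 : ℝ) + 1) ^ q.2 * r ^ (q.1 + 1) / ((q.2 + 1).factorial : ℝ) := by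
      intro q
      positivity
    rw [summable_prod_of_nonneg hnn]
    have key : ∀ k m : ℕ, ε ^ (m + 1) * ((k : ℝ) + 1) ^ m * r ^ (k + 1) / ((m + 1).factorial : ℝ)
        = (r ^ (k + 1) / ((k : ℝ) + 1)) * ((ε * ((k : ℝ) + 1)) ^ (m + 1) / ((m + 1).factorial : ℝ)) := by
      intro k m
      have hk : ((k : ℝ) + 1) ≠ 0 := by positivity
      rw [mul_pow]
      field_simp
      ring
    constructor
    · intro k
      have := (hasSum_exp_sub_one_real (ε * ((k : ℝ) + 1))).summable.mul_left
        (r ^ (k + 1) / ((k : ℝ) + 1))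
      refine this.congr fun m => ?_
      rw [key]
    · -- the fiber sums
      have htsum : ∀ k : ℕ,
          (∑' m : ℕ, ε ^ (m + 1) * ((k : ℝ) + 1) ^ m * r ^ (k + 1) / ((m + 1).factorial : ℝ))
          = (r ^ (k + 1) / ((k : ℝ) + 1)) * (Real.exp (ε * ((k : ℝ) + 1)) - 1) := by
        intro k
        have h2 := (hasSum_exp_sub_one_real (ε * ((k : ℝ) + 1))).mul_left
          (r ^ (k + 1) / ((k : ℝ) + 1))
        have h3 := h2.tsum_eq
        rw [← h3]
        exact tsum_congr fun m => key k m
      have hgeo : Summable (fun k : ℕ => (r * Real.exp ε) ^ (k + 1)) := by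
        have : Summable (fun k : ℕ => (r * Real.exp ε) ^ k) :=
          summable_geometric_of_lt_one (by positivity) hs
        simpa [pow_succ] using this.mul_right (r * Real.exp ε)
      refine Summable.of_nonneg_of_le (fun k => ?_) (fun k => ?_) hgeo
      · rw [htsum]
        have h1 : (0:ℝ) ≤ r ^ (k + 1) / ((k : ℝ) + 1) := by positivity
        have h2 : (0:ℝ) ≤ Real.exp (ε * ((k : ℝ) + 1)) - 1 := by
          have := Real.one_le_exp (show 0 ≤ ε * ((k : ℝ) + 1) by positivity)
          linarith
        exact mul_nonneg h1 h2
      · rw [htsum]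
        have hb1 : r ^ (k + 1) / ((k : ℝ) + 1) ≤ r ^ (k + 1) := by
          apply div_le_self (by positivity)
          have : (0:ℝ) ≤ (k:ℝ) := Nat.cast_nonneg k
          linarith
        have hb2 : Real.exp (ε * ((k : ℝ) + 1)) - 1 ≤ (Real.exp ε) ^ (k + 1) := by
          rw [← Real.exp_nat_mul]
          have : Real.exp (ε * ((k : ℝ) + 1)) = Real.exp (((k:ℝ)+1) * ε) := by ring_nf
          rw [this]
          have : ((k + 1 : ℕ) : ℝ) * ε = ((k:ℝ)+1) * ε := by push_cast; ring
          rw [this]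
          linarith [Real.exp_pos (((k:ℝ)+1) * ε)]
        calc r ^ (k + 1) / ((k : ℝ) + 1) * (Real.exp (ε * ((k : ℝ) + 1)) - 1)
            ≤ r ^ (k + 1) * (Real.exp ε) ^ (k + 1) := by
              apply mul_le_mul hb1 hb2 _ (by positivity)
              · have := Real.one_le_exp (show 0 ≤ ε * ((k : ℝ) + 1) by positivity)
                linarith
          _ = (r * Real.exp ε) ^ (k + 1) := by rw [mul_pow]
  have := hq.prod_symm
  exact this.congr fun p => rfl

lemma multiset_hasSum_sum {s : Multiset ℂ} {f : ℂ → ℕ × ℕ → ℂ} {E : ℂ → ℂ}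
    (h : ∀ ζ ∈ s, HasSum (f ζ) (E ζ)) :
    HasSum (fun p => (s.map (fun ζ => f ζ p)).sum) ((s.map E).sum) := by
  induction s using Multiset.induction with
  | empty => simpa using hasSum_zero
  | cons a t ih =>
    simp only [Multiset.map_cons, Multiset.sum_cons]
    exact (h a (Multiset.mem_cons_self a t)).add
      (ih fun ζ hζ => h ζ (Multiset.mem_cons_of_mem hζ))

lemma multiset_prod_exp_neg (s : Multiset ℂ) (c : ℂ → ℂ) :
    (s.map (fun ζ => Complex.exp (-(c ζ)))).prod = Complex.exp (-((s.map c).sum)) := by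
  induction s using Multiset.induction with
  | empty => simp
  | cons a t ih =>
    simp only [Multiset.map_cons, Multiset.prod_cons, Multiset.sum_cons, ih, neg_add,
      Complex.exp_add]

lemma multiset_sum_abs_le (s : Multiset ℂ) (f : ℂ → ℂ) (C : ℝ) (hC : 0 ≤ C)
    (h : ∀ ζ ∈ s, ‖f ζ‖ ≤ C) :
    ‖(s.map f).sum‖ ≤ (Multiset.card s : ℝ) * C := by
  induction s using Multiset.induction with
  | empty => simp
  | cons a t ih =>
    simp only [Multiset.map_cons, Multiset.sum_cons, Multiset.card_cons]
    calc ‖f a + (t.map f).sum‖ ≤ ‖f a‖ + ‖(t.map f).sum‖ :=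
          norm_add_le _ _
      _ ≤ C + (Multiset.card t : ℝ) * C := by
          exact add_le_add (h a (Multiset.mem_cons_self a t))
            (ih fun ζ hζ => h ζ (Multiset.mem_cons_of_mem hζ))
      _ = ((Multiset.card t + 1 : ℕ) : ℝ) * C := by push_cast; ring

lemma ratio_eq_exp {u v : ℂ} (hu : ‖u‖ < 1) (hv : ‖v‖ < 1) {L : ℂ}
    (hL : HasSum (fun k : ℕ => (u ^ (k + 1) - v ^ (k + 1)) / ((k : ℂ) + 1)) L) :
    (1 - u) / (1 - v) = Complex.exp (-L) := by
  have hu' : ‖u‖ < 1 := hu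
  have hv' : ‖v‖ < 1 := hv
  have h1 : HasSum (fun k : ℕ => u ^ (k + 1) / ((k + 1 : ℕ) : ℂ)) (-Complex.log (1 - u)) := by
    have := Complex.hasSum_taylorSeries_neg_log hu'
    have h2 := (hasSum_nat_add_iff' (f := fun n : ℕ => u ^ n / (n : ℂ)) 1).mpr this
    simpa using h2
  have h2 : HasSum (fun k : ℕ => v ^ (k + 1) / ((k + 1 : ℕ) : ℂ)) (-Complex.log (1 - v)) := by
    have := Complex.hasSum_taylorSeries_neg_log hv'
    have h2 := (hasSum_nat_add_iff' (f := fun n : ℕ => v ^ n / (n : ℂ)) 1).mpr this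
    simpa using h2
  have h3 : HasSum (fun k : ℕ => (u ^ (k + 1) - v ^ (k + 1)) / ((k : ℂ) + 1))
      (-Complex.log (1 - u) + Complex.log (1 - v)) := by
    have h := h1.sub h2
    have heq : (fun k : ℕ => (u ^ (k + 1) - v ^ (k + 1)) / ((k : ℂ) + 1))
        = fun k : ℕ => u ^ (k + 1) / ((k + 1 : ℕ) : ℂ) - v ^ (k + 1) / ((k + 1 : ℕ) : ℂ) := by
      funext k; push_cast; ring
    rw [heq]
    rw [show -Complex.log (1 - u) + Complex.log (1 - v) = -Complex.log (1 - u) - -Complex.log (1 - v) by ring]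
    exact h
  have hLe : L = -Complex.log (1 - u) + Complex.log (1 - v) := hL.unique h3
  have hune : (1 : ℂ) - u ≠ 0 := by
    intro h
    have : u = 1 := by linear_combination -h
    rw [this] at hu; simp at hu
  have hvne : (1 : ℂ) - v ≠ 0 := by
    intro h
    have : v = 1 := by linear_combination -h
    rw [this] at hv; simp at hv
  rw [hLe]
  rw [neg_add, neg_neg, Complex.exp_add, Complex.exp_log hune, Complex.exp_neg,
    Complex.exp_log hvne]
  field_simp

lemma hasSum_exp_sub_one (w : ℂ) :
    HasSum (fun m : ℕ => w ^ (m + 1) / ((m + 1).factorial : ℂ)) (Complex.exp w - 1) := by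
  have h : HasSum (fun n : ℕ => w ^ n / (n.factorial : ℂ)) (Complex.exp w) := by
    rw [Complex.exp_eq_exp_ℂ]
    exact NormedSpace.expSeries_div_hasSum_exp w
  have := (hasSum_nat_add_iff' (f := fun n : ℕ => w ^ n / (n.factorial : ℂ)) 1).mpr h
  simpa using this

noncomputable def gO (ζ θ : ℂ) (p : ℕ × ℕ) : ℂ :=
  (Complex.I * θ) ^ (p.1 + 1) / ((p.1 + 1).factorial : ℂ) *
    ((ζ ^ (p.2 + 1))⁻¹ * ((p.2 : ℂ) + 1) ^ p.1)

noncomputable def EO (ζ θ : ℂ) : ℂ := ∑' p : ℕ × ℕ, gO ζ θ p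

noncomputable def gI (ζ θ : ℂ) (p : ℕ × ℕ) : ℂ :=
  (Complex.I * θ) ^ (p.1 + 1) / ((p.1 + 1).factorial : ℂ) *
    ((-1) ^ (p.1 + 1) * (ζ ^ (p.2 + 1) * ((p.2 : ℂ) + 1) ^ p.1))

noncomputable def EI (ζ θ : ℂ) : ℂ := ∑' p : ℕ × ℕ, gI ζ θ p

lemma abs_exp_le (z : ℂ) : ‖Complex.exp z‖ ≤ Real.exp (‖z‖) := by
  rw [Complex.norm_exp]
  exact Real.exp_le_exp.mpr (Complex.re_le_norm z)

lemma outside_root {ζ θ : ℂ} {ε r : ℝ} (hε : 0 < ε) (hθ : ‖θ‖ ≤ ε)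
    (hζ : 1 < ‖ζ‖) (hr0 : 0 < r) (hr : (‖ζ‖)⁻¹ ≤ r)
    (hrε : r * Real.exp ε < 1) :
    HasSum (gO ζ θ) (EO ζ θ) ∧
      Complex.exp (Complex.I * θ) - ζ = (1 - ζ) * Complex.exp (-(EO ζ θ)) := by
  have hζ0 : ζ ≠ 0 := by
    intro h; rw [h] at hζ; simp at hζ; linarith
  have habsζ : (0:ℝ) < ‖ζ‖ := by linarith
  set u : ℂ := Complex.exp (Complex.I * θ) / ζ with hu_def
  set v : ℂ := ζ⁻¹ with hv_def
  -- summability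
  have hsummable : Summable (gO ζ θ) := by
    refine Summable.of_norm_bounded (master_summable (r := r) hr0 hε hrε) ?_
    rintro ⟨m, k⟩
    have h3 : ‖(k : ℂ) + 1‖ = (k : ℝ) + 1 := by
      rw [show ((k : ℂ) + 1) = ((k + 1 : ℕ) : ℂ) by push_cast; ring, Complex.norm_natCast]
      push_cast; ring
    have key : ‖gO ζ θ (m, k)‖ =
        (‖θ‖) ^ (m + 1) * ((k : ℝ) + 1) ^ m * ((‖ζ‖)⁻¹) ^ (k + 1)
          / ((m + 1).factorial : ℝ) := by
      simp only [gO, norm_mul, norm_div, norm_pow, norm_inv,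
        Complex.norm_I, one_mul, h3, Complex.norm_natCast]
      ring
    rw [key]
    gcongr
  have hsum : HasSum (gO ζ θ) (EO ζ θ) := hsummable.hasSum
  refine ⟨hsum, ?_⟩
  -- fiberwise sums over m for fixed k
  have hkne : ∀ k : ℕ, ((k : ℂ) + 1) ≠ 0 := fun k => Nat.cast_add_one_ne_zero k
  have hfib : ∀ k : ℕ, HasSum (fun m => gO ζ θ (m, k))
      ((u ^ (k + 1) - v ^ (k + 1)) / ((k : ℂ) + 1)) := by
    intro k
    have hζk : ζ ^ (k + 1) ≠ 0 := pow_ne_zero _ hζ0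
    have hw := (hasSum_exp_sub_one (Complex.I * θ * ((k : ℂ) + 1))).mul_left
      ((ζ ^ (k + 1))⁻¹ / ((k : ℂ) + 1))
    have hval : (ζ ^ (k + 1))⁻¹ / ((k : ℂ) + 1) *
        (Complex.exp (Complex.I * θ * ((k : ℂ) + 1)) - 1)
        = (u ^ (k + 1) - v ^ (k + 1)) / ((k : ℂ) + 1) := by
      have hexp : Complex.exp (Complex.I * θ * ((k : ℂ) + 1))
          = Complex.exp (Complex.I * θ) ^ (k + 1) := by
        rw [show (Complex.I * θ * ((k : ℂ) + 1)) = ((k + 1 : ℕ) : ℂ) * (Complex.I * θ) by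
          push_cast; ring, Complex.exp_nat_mul]
      rw [hexp, hu_def, hv_def, div_pow, inv_pow]
      field_simp
    rw [hval] at hw
    refine HasSum.congr_fun hw fun m => ?_
    have hfa : (((m + 1).factorial : ℕ) : ℂ) ≠ 0 := by
      exact_mod_cast (m + 1).factorial_ne_zero
    have cancel : ((k : ℂ) + 1) * ((k : ℂ) + 1)⁻¹ = 1 := mul_inv_cancel₀ (hkne k)
    simp only [gO]
    symm
    calc (ζ ^ (k + 1))⁻¹ / ((k : ℂ) + 1) *
          ((Complex.I * θ * ((k : ℂ) + 1)) ^ (m + 1) / (((m + 1).factorial : ℕ) : ℂ))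
        = (Complex.I * θ) ^ (m + 1) / (((m + 1).factorial : ℕ) : ℂ) *
            ((ζ ^ (k + 1))⁻¹ * (((k : ℂ) + 1) ^ m * (((k : ℂ) + 1) * ((k : ℂ) + 1)⁻¹))) := by
          rw [mul_pow, pow_succ ((k : ℂ) + 1) m]
          ring
      _ = (Complex.I * θ) ^ (m + 1) / (((m + 1).factorial : ℕ) : ℂ) *
            ((ζ ^ (k + 1))⁻¹ * ((k : ℂ) + 1) ^ m) := by rw [cancel, mul_one]
  -- rearrangement of the double sum
  have hsum' : Summable (fun q : ℕ × ℕ => gO ζ θ q.swap) := hsummable.prod_symm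
  have htse : (∑' q : ℕ × ℕ, gO ζ θ q.swap) = EO ζ θ := by
    rw [EO]
    exact (Equiv.prodComm ℕ ℕ).tsum_eq (gO ζ θ)
  have hEk : HasSum (fun k : ℕ => (u ^ (k + 1) - v ^ (k + 1)) / ((k : ℂ) + 1)) (EO ζ θ) := by
    rw [← htse]
    exact hsum'.hasSum.prod_fiberwise fun k => hfib k
  -- norms of u and v
  have hv1 : ‖v‖ < 1 := by
    rw [hv_def, norm_inv]
    exact inv_lt_one_of_one_lt₀ hζ
  have hu1 : ‖u‖ < 1 := by
    rw [hu_def, norm_div]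
    have h1 : ‖Complex.exp (Complex.I * θ)‖ ≤ Real.exp ε := by
      refine (abs_exp_le _).trans (Real.exp_le_exp.mpr ?_)
      calc ‖Complex.I * θ‖ = ‖θ‖ := by
            rw [norm_mul, Complex.norm_I, one_mul]
        _ ≤ ε := hθ
    calc ‖Complex.exp (Complex.I * θ)‖ / ‖ζ‖
        ≤ Real.exp ε / ‖ζ‖ := by gcongr
      _ = (‖ζ‖)⁻¹ * Real.exp ε := by rw [div_eq_mul_inv]; ring
      _ ≤ r * Real.exp ε := by
          apply mul_le_mul_of_nonneg_right hr (Real.exp_nonneg ε)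
      _ < 1 := hrε
  have hratio := ratio_eq_exp hu1 hv1 hEk
  have hvne : (1 : ℂ) - v ≠ 0 := by
    intro h
    have : v = 1 := by linear_combination -h
    rw [this] at hv1; simp at hv1
  have hstep : (1 : ℂ) - ζ = -ζ * (1 - v) := by
    rw [hv_def]
    field_simp
    ring
  rw [← hratio, hstep]
  calc Complex.exp (Complex.I * θ) - ζ = -ζ * (1 - u) := by
        rw [hu_def]
        field_simp
        ring
    _ = -ζ * (1 - u) * ((1 - v) / (1 - v)) := by rw [div_self hvne, mul_one]
    _ = -ζ * (1 - v) * ((1 - u) / (1 - v)) := by ring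

lemma inside_root {ζ θ : ℂ} {ε r : ℝ} (hε : 0 < ε) (hθ : ‖θ‖ ≤ ε)
    (hζ : ‖ζ‖ < 1) (hr0 : 0 < r) (hr : ‖ζ‖ ≤ r)
    (hrε : r * Real.exp ε < 1) :
    HasSum (gI ζ θ) (EI ζ θ) ∧
      Complex.exp (Complex.I * θ) - ζ =
        (1 - ζ) * (Complex.exp (Complex.I * θ) * Complex.exp (-(EI ζ θ))) := by
  set u : ℂ := ζ * Complex.exp (-(Complex.I * θ)) with hu_def
  set v : ℂ := ζ with hv_def
  have hsummable : Summable (gI ζ θ) := by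
    refine Summable.of_norm_bounded (master_summable (r := r) hr0 hε hrε) ?_
    rintro ⟨m, k⟩
    have h3 : ‖(k : ℂ) + 1‖ = (k : ℝ) + 1 := by
      rw [show ((k : ℂ) + 1) = ((k + 1 : ℕ) : ℂ) by push_cast; ring, Complex.norm_natCast]
      push_cast; ring
    have key : ‖gI ζ θ (m, k)‖ =
        (‖θ‖) ^ (m + 1) * ((k : ℝ) + 1) ^ m * (‖ζ‖) ^ (k + 1)
          / ((m + 1).factorial : ℝ) := by
      simp only [gI, norm_mul, norm_div, norm_pow, norm_neg,
        norm_one, Complex.norm_I, one_mul, h3, Complex.norm_natCast, one_pow]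
      ring
    rw [key]
    gcongr
  have hsum : HasSum (gI ζ θ) (EI ζ θ) := hsummable.hasSum
  refine ⟨hsum, ?_⟩
  have hkne : ∀ k : ℕ, ((k : ℂ) + 1) ≠ 0 := fun k => Nat.cast_add_one_ne_zero k
  have hfib : ∀ k : ℕ, HasSum (fun m => gI ζ θ (m, k))
      ((u ^ (k + 1) - v ^ (k + 1)) / ((k : ℂ) + 1)) := by
    intro k
    have hw := (hasSum_exp_sub_one (-(Complex.I * θ * ((k : ℂ) + 1)))).mul_left
      (ζ ^ (k + 1) / ((k : ℂ) + 1))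
    have hval : ζ ^ (k + 1) / ((k : ℂ) + 1) *
        (Complex.exp (-(Complex.I * θ * ((k : ℂ) + 1))) - 1)
        = (u ^ (k + 1) - v ^ (k + 1)) / ((k : ℂ) + 1) := by
      have hexp : Complex.exp (-(Complex.I * θ * ((k : ℂ) + 1)))
          = Complex.exp (-(Complex.I * θ)) ^ (k + 1) := by
        rw [show (-(Complex.I * θ * ((k : ℂ) + 1))) = ((k + 1 : ℕ) : ℂ) * (-(Complex.I * θ)) by
          push_cast; ring, Complex.exp_nat_mul]
      rw [hexp, hu_def, hv_def, mul_pow]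
      ring
    rw [hval] at hw
    refine HasSum.congr_fun hw fun m => ?_
    have cancel : ((k : ℂ) + 1) * ((k : ℂ) + 1)⁻¹ = 1 := mul_inv_cancel₀ (hkne k)
    simp only [gI]
    symm
    calc ζ ^ (k + 1) / ((k : ℂ) + 1) *
          ((-(Complex.I * θ * ((k : ℂ) + 1))) ^ (m + 1) / (((m + 1).factorial : ℕ) : ℂ))
        = (Complex.I * θ) ^ (m + 1) / (((m + 1).factorial : ℕ) : ℂ) *
            ((-1) ^ (m + 1) *
              (ζ ^ (k + 1) * (((k : ℂ) + 1) ^ m * (((k : ℂ) + 1) * ((k : ℂ) + 1)⁻¹)))) := by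
          rw [neg_pow, mul_pow, pow_succ ((k : ℂ) + 1) m]
          ring
      _ = (Complex.I * θ) ^ (m + 1) / (((m + 1).factorial : ℕ) : ℂ) *
            ((-1) ^ (m + 1) * (ζ ^ (k + 1) * ((k : ℂ) + 1) ^ m)) := by rw [cancel, mul_one]
  have hsum' : Summable (fun q : ℕ × ℕ => gI ζ θ q.swap) := hsummable.prod_symm
  have htse : (∑' q : ℕ × ℕ, gI ζ θ q.swap) = EI ζ θ := by
    rw [EI]
    exact (Equiv.prodComm ℕ ℕ).tsum_eq (gI ζ θ)
  have hEk : HasSum (fun k : ℕ => (u ^ (k + 1) - v ^ (k + 1)) / ((k : ℂ) + 1)) (EI ζ θ) := by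
    rw [← htse]
    exact hsum'.hasSum.prod_fiberwise fun k => hfib k
  have hv1 : ‖v‖ < 1 := hζ
  have hu1 : ‖u‖ < 1 := by
    rw [hu_def, norm_mul]
    have h1 : ‖Complex.exp (-(Complex.I * θ))‖ ≤ Real.exp ε := by
      refine (abs_exp_le _).trans (Real.exp_le_exp.mpr ?_)
      calc ‖-(Complex.I * θ)‖ = ‖θ‖ := by
            rw [norm_neg, norm_mul, Complex.norm_I, one_mul]
        _ ≤ ε := hθ
    calc ‖ζ‖ * ‖Complex.exp (-(Complex.I * θ))‖
        ≤ r * Real.exp ε := by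
          apply mul_le_mul hr h1 (norm_nonneg _) (le_of_lt hr0)
      _ < 1 := hrε
  have hratio := ratio_eq_exp hu1 hv1 hEk
  have hvne : (1 : ℂ) - v ≠ 0 := by
    intro h
    have : v = 1 := by linear_combination -h
    rw [this] at hv1; simp at hv1
  have hee : Complex.exp (Complex.I * θ) * Complex.exp (-(Complex.I * θ)) = 1 := by
    rw [← Complex.exp_add]; simp
  rw [← hratio]
  calc Complex.exp (Complex.I * θ) - ζ
      = Complex.exp (Complex.I * θ) * (1 - u) := by
        rw [hu_def]; linear_combination ζ * hee
    _ = Complex.exp (Complex.I * θ) * (1 - u) * ((1 - v) / (1 - v)) := by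
        rw [div_self hvne, mul_one]
    _ = (1 - v) * (Complex.exp (Complex.I * θ) * ((1 - u) / (1 - v))) := by ring

end Helpers

lemma foldr_max_facts (l : List ℝ) :
    (1/2 : ℝ) ≤ l.foldr max (1/2) ∧ (∀ x ∈ l, x ≤ l.foldr max (1/2)) ∧
      ((∀ x ∈ l, x < 1) → l.foldr max (1/2) < 1) := by
  induction l with
  | nil => refine ⟨le_refl _, by simp, fun _ => by norm_num⟩
  | cons a t ih =>
    obtain ⟨ih1, ih2, ih3⟩ := ih
    refine ⟨?_, ?_, ?_⟩
    · simp only [List.foldr_cons]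
      exact ih1.trans (le_max_right _ _)
    · intro x hx
      rcases List.mem_cons.mp hx with h | h
      · subst h; exact le_max_left _ _
      · exact (ih2 x h).trans (le_max_right _ _)
    · intro h
      simp only [List.foldr_cons]
      exact max_lt (h a List.mem_cons_self) (ih3 fun x hx => h x (List.mem_cons_of_mem a hx))


/-- **Lemma 7 (cumulant form of the pgf).**  If every root `ζ` of the probability
generating function `P` of `X ∈ {0,…,n}` satisfies `|1 - ζ| > δ` and `|ζ| ≠ 1`, then
there is an `ε > 0` such that for all complex `θ` with `|θ| < ε`,
`P(e^{iθ}) = exp(-∑_{m≥1} ((iθ)^m / m!) (A_m + B_m) + R i θ)`;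
moreover `ε` may be chosen so that the defining double sum (over `m ≥ 1`, `k ≥ 1`)
converges absolutely, uniformly on `{|θ| < ε}` (in the sense of a Weierstrass test). -/

theorem pgf_cumulant_form
    (δ : ℝ) (hδ : 0 < δ) (n : ℕ)
    (Ω : Type) [MeasurableSpace Ω] (μ : Measure Ω) [IsProbabilityMeasure μ]
    (X : Ω → ℝ) (hmeas : Measurable X)
    (hval : ∀ ω, ∃ k : ℕ, k ≤ n ∧ X ω = k)
    (P : Polynomial ℂ) (hP : P = pgf μ X n)
    (hroots : ∀ ζ ∈ P.roots, δ < ‖1 - ζ‖ ∧ ‖ζ‖ ≠ 1) :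
    ∃ ε > (0 : ℝ),
      (∀ θ : ℂ, ‖θ‖ < ε →
        P.eval (Complex.exp (Complex.I * θ)) =
          Complex.exp
            (-(∑' m : ℕ, ((Complex.I * θ) ^ (m + 1) / ((m + 1).factorial : ℂ)) *
                (Am P (m + 1) + Bm P (m + 1)))
              + (Rnum P : ℂ) * Complex.I * θ)) ∧
      (∃ bound : ℕ × ℕ → ℝ, Summable bound ∧
        ∀ θ : ℂ, ‖θ‖ < ε → ∀ p : ℕ × ℕ,
          ‖(((Complex.I * θ) ^ (p.1 + 1) / ((p.1 + 1).factorial : ℂ)) *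
              (Tk P (p.2 + 1) * ((p.2 : ℂ) + 1) ^ p.1
                + (-1) ^ (p.1 + 1) * Sk P (p.2 + 1) * ((p.2 : ℂ) + 1) ^ p.1))‖
            ≤ bound p) := by

  classical
  -- ### P.eval 1 = 1
  have hA : ∀ k : ℕ, MeasurableSet {ω | X ω = (k : ℝ)} := fun k =>
    hmeas (measurableSet_singleton _)
  have hsum1 : ∑ k ∈ Finset.range (n + 1), μ {ω | X ω = (k : ℝ)} = 1 := by
    have hd : Set.PairwiseDisjoint ↑(Finset.range (n + 1))
        (fun k : ℕ => {ω | X ω = (k : ℝ)}) := by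
      intro i _ j _ hij
      simp only [Function.onFun]
      apply Set.disjoint_left.mpr
      intro ω h1 h2
      exact hij (Nat.cast_inj.mp ((h1 : X ω = (i:ℝ)).symm.trans (h2 : X ω = (j:ℝ))))
    rw [← measure_biUnion_finset hd (fun k _ => hA k)]
    have huniv : (⋃ k ∈ Finset.range (n + 1), {ω | X ω = (k : ℝ)}) = Set.univ := by
      ext ω
      simp only [Set.mem_iUnion, Set.mem_univ, iff_true, Finset.mem_range, Set.mem_setOf_eq]
      obtain ⟨k, hk, hx⟩ := hval ω
      exact ⟨k, Nat.lt_succ_of_le hk, hx⟩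
    rw [huniv, measure_univ]
  have hP1 : P.eval 1 = 1 := by
    have hreal : ∑ k ∈ Finset.range (n + 1), (μ {ω | X ω = (k : ℝ)}).toReal = 1 := by
      rw [← ENNReal.toReal_sum (fun k _ => measure_ne_top μ _), hsum1, ENNReal.toReal_one]
    rw [hP, pgf]
    simp only [Polynomial.eval_finset_sum, Polynomial.eval_mul, Polynomial.eval_C,
      Polynomial.eval_pow, Polynomial.eval_X, one_pow, mul_one]
    exact_mod_cast hreal
  -- ### factorization over the roots
  have hfac : ∀ z : ℂ, P.eval z = P.leadingCoeff * ((P.roots.map fun ζ => z - ζ).prod) := by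
    intro z
    have hsplits : P.Splits := IsAlgClosed.splits P
    conv_lhs => rw [hsplits.eq_prod_roots]
    rw [Polynomial.eval_mul, Polynomial.eval_C, Polynomial.eval_multiset_prod,
      Multiset.map_map]
    simp [Function.comp]
  have hProd1 : P.leadingCoeff * ((P.roots.map fun ζ => (1 : ℂ) - ζ).prod) = 1 :=
    (hfac 1).symm.trans hP1
  -- ### splitting the roots
  set sIn : Multiset ℂ := P.roots.filter (fun ζ => ‖ζ‖ < 1) with hsIn_def
  set sOut : Multiset ℂ := P.roots.filter (fun ζ => 1 < ‖ζ‖) with hsOut_def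
  have hInMem : ∀ ζ ∈ sIn, ζ ∈ P.roots ∧ ‖ζ‖ < 1 := fun ζ hζ =>
    Multiset.mem_filter.mp hζ
  have hOutMem : ∀ ζ ∈ sOut, ζ ∈ P.roots ∧ 1 < ‖ζ‖ := fun ζ hζ =>
    Multiset.mem_filter.mp hζ
  have hsplit : sIn + sOut = P.roots := by
    have h2 : P.roots.filter (fun ζ => ¬ ‖ζ‖ < 1) = sOut := by
      apply Multiset.filter_congr
      intro ζ hζ
      have hne := (hroots ζ hζ).2
      simp only [not_lt]
      exact ⟨fun h => lt_of_le_of_ne h (Ne.symm hne), le_of_lt⟩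
    rw [hsIn_def, ← h2]
    exact Multiset.filter_add_not _ _
  -- ### choice of ε
  set f : ℂ → ℝ := fun ζ => if ‖ζ‖ < 1 then ‖ζ‖ else (‖ζ‖)⁻¹
    with hf_def
  set l : List ℝ := P.roots.toList.map f with hl_def
  set r : ℝ := l.foldr max (1/2) with hr_def
  obtain ⟨hr_half, hr_mem, hr_lt⟩ := foldr_max_facts l
  have hr0 : 0 < r := lt_of_lt_of_le (by norm_num) hr_half
  have hrb : ∀ ζ ∈ P.roots, f ζ ≤ r := by
    intro ζ hζ
    exact hr_mem (f ζ) (List.mem_map_of_mem ((Multiset.mem_toList).mpr hζ))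
  have hr1 : r < 1 := by
    apply hr_lt
    intro x hx
    obtain ⟨ζ, hζ, rfl⟩ := List.mem_map.mp hx
    have hζr : ζ ∈ P.roots := (Multiset.mem_toList).mp hζ
    have hne := (hroots ζ hζr).2
    by_cases h : ‖ζ‖ < 1
    · simpa only [f, if_pos h] using h
    · simp only [f, if_neg h]
      have h1 : 1 < ‖ζ‖ := lt_of_le_of_ne (not_lt.mp h) (Ne.symm hne)
      exact inv_lt_one_of_one_lt₀ h1
  have hrIn : ∀ ζ ∈ sIn, ‖ζ‖ ≤ r := by
    intro ζ hζ
    obtain ⟨hmem, habs⟩ := hInMem ζ hζ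
    have := hrb ζ hmem
    simpa only [f, if_pos habs] using this
  have hrOut : ∀ ζ ∈ sOut, (‖ζ‖)⁻¹ ≤ r := by
    intro ζ hζ
    obtain ⟨hmem, habs⟩ := hOutMem ζ hζ
    have := hrb ζ hmem
    simpa only [f, if_neg (not_lt.mpr (le_of_lt habs))] using this
  set ε : ℝ := Real.log (((1 + r)/2) / r) with hε_def
  have hmid1 : r < (1 + r)/2 := by linarith
  have hmid2 : (1 + r)/2 < 1 := by linarith
  have hε : 0 < ε := Real.log_pos (by rw [lt_div_iff₀ hr0]; linarith)
  have hεr : r * Real.exp ε < 1 := by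
    rw [hε_def, Real.exp_log (by positivity)]
    rw [mul_div_assoc', mul_comm, mul_div_assoc, div_self (ne_of_gt hr0), mul_one]
    exact hmid2
  refine ⟨ε, hε, ?_, ?_⟩
  · -- ### main identity
    intro θ hθabs
    have hθ : ‖θ‖ ≤ ε := le_of_lt hθabs
    have hON : ∀ ζ ∈ sOut, HasSum (gO ζ θ) (EO ζ θ) ∧
        Complex.exp (Complex.I * θ) - ζ = (1 - ζ) * Complex.exp (-(EO ζ θ)) := fun ζ hζ =>
      outside_root hε hθ (hOutMem ζ hζ).2 hr0 (hrOut ζ hζ) hεr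
    have hIN : ∀ ζ ∈ sIn, HasSum (gI ζ θ) (EI ζ θ) ∧
        Complex.exp (Complex.I * θ) - ζ =
          (1 - ζ) * (Complex.exp (Complex.I * θ) * Complex.exp (-(EI ζ θ))) := fun ζ hζ =>
      inside_root hε hθ (hInMem ζ hζ).2 hr0 (hrIn ζ hζ) hεr
    set TO : ℂ := ((sOut.map fun ζ => EO ζ θ)).sum with hTO_def
    set TI : ℂ := ((sIn.map fun ζ => EI ζ θ)).sum with hTI_def
    have HO : HasSum (fun p => (sOut.map (fun ζ => gO ζ θ p)).sum) TO :=
      multiset_hasSum_sum (fun ζ hζ => (hON ζ hζ).1)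
    have HI : HasSum (fun p => (sIn.map (fun ζ => gI ζ θ p)).sum) TI :=
      multiset_hasSum_sum (fun ζ hζ => (hIN ζ hζ).1)
    have HOI := HO.add HI
    set Fbig : ℕ × ℕ → ℂ := fun p =>
      (Complex.I * θ) ^ (p.1 + 1) / ((p.1 + 1).factorial : ℂ) *
        (Tk P (p.2 + 1) * ((p.2 : ℂ) + 1) ^ p.1 +
          (-1) ^ (p.1 + 1) * (Sk P (p.2 + 1) * ((p.2 : ℂ) + 1) ^ p.1)) with hFbig_def
    have HFbig : HasSum Fbig (TO + TI) := by
      refine HasSum.congr_fun HOI fun p => ?_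
      rcases p with ⟨m, k⟩
      have h1 : (sOut.map (fun ζ => gO ζ θ (m, k))).sum =
          (Complex.I * θ) ^ (m + 1) / ((m + 1).factorial : ℂ) *
            (Tk P (k + 1) * ((k : ℂ) + 1) ^ m) := by
        simp only [gO]
        rw [Multiset.sum_map_mul_left, Multiset.sum_map_mul_right]
        rfl
      have h2 : (sIn.map (fun ζ => gI ζ θ (m, k))).sum =
          (Complex.I * θ) ^ (m + 1) / ((m + 1).factorial : ℂ) *
            ((-1) ^ (m + 1) * (Sk P (k + 1) * ((k : ℂ) + 1) ^ m)) := by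
        simp only [gI]
        rw [Multiset.sum_map_mul_left, Multiset.sum_map_mul_left, Multiset.sum_map_mul_right]
        rfl
      rw [hFbig_def]
      simp only []
      rw [h1, h2]
      ring
    -- bounds on Tk / Sk
    set N : ℝ := (Multiset.card P.roots : ℝ) with hN_def
    have hN0 : 0 ≤ N := by positivity
    have hTk_bound : ∀ k : ℕ, ‖Tk P (k + 1)‖ ≤ N * r ^ (k + 1) := by
      intro k
      have := multiset_sum_abs_le sOut (fun ζ => (ζ ^ (k + 1))⁻¹) (r ^ (k + 1))
        (by positivity) (fun ζ hζ => by
          rw [norm_inv, norm_pow, ← inv_pow]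
          exact pow_le_pow_left₀ (by positivity) (hrOut ζ hζ) (k + 1))
      refine le_trans this ?_
      apply mul_le_mul_of_nonneg_right _ (by positivity)
      have : Multiset.card sOut ≤ Multiset.card P.roots :=
        Multiset.card_le_card (Multiset.filter_le _ _)
      rw [hN_def]
      exact_mod_cast this
    have hSk_bound : ∀ k : ℕ, ‖Sk P (k + 1)‖ ≤ N * r ^ (k + 1) := by
      intro k
      have := multiset_sum_abs_le sIn (fun ζ => ζ ^ (k + 1)) (r ^ (k + 1))
        (by positivity) (fun ζ hζ => by
          rw [norm_pow]
          exact pow_le_pow_left₀ (norm_nonneg _) (hrIn ζ hζ) (k + 1))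
      refine le_trans this ?_
      apply mul_le_mul_of_nonneg_right _ (by positivity)
      have : Multiset.card sIn ≤ Multiset.card P.roots :=
        Multiset.card_le_card (Multiset.filter_le _ _)
      rw [hN_def]
      exact_mod_cast this
    -- geometric-type summability of the k-indexed series
    have hgeo : ∀ m : ℕ, Summable (fun k : ℕ => ((k : ℝ) + 1) ^ m * r ^ (k + 1)) := by
      intro m
      have h0 : Summable (fun n : ℕ => (n : ℝ) ^ m * r ^ n) := by
        apply summable_pow_mul_geometric_of_norm_lt_one
        rw [Real.norm_eq_abs, abs_of_pos hr0]
        exact hr1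
      have h1 : Summable ((fun n : ℕ => (n : ℝ) ^ m * r ^ n) ∘ (fun k : ℕ => k + 1)) :=
        h0.comp_injective (add_left_injective 1)
      refine h1.congr fun k => ?_
      simp only [Function.comp]
      push_cast
      ring
    have hTsummable : ∀ m : ℕ, Summable (fun k : ℕ => Tk P (k + 1) * ((k : ℂ) + 1) ^ m) := by
      intro m
      apply Summable.of_norm_bounded (g := fun k : ℕ => N * (((k : ℝ) + 1) ^ m * r ^ (k + 1)))
        ((hgeo m).mul_left N)
      intro k
      rw [norm_mul, norm_pow]
      have h3 : ‖((k : ℂ) + 1)‖ = (k : ℝ) + 1 := by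
        rw [show ((k : ℂ) + 1) = ((k + 1 : ℕ) : ℂ) by push_cast; ring, Complex.norm_natCast]
        push_cast; ring
      rw [h3]
      calc ‖Tk P (k + 1)‖ * ((k : ℝ) + 1) ^ m
          ≤ (N * r ^ (k + 1)) * ((k : ℝ) + 1) ^ m := by
            apply mul_le_mul_of_nonneg_right (hTk_bound k) (by positivity)
        _ = N * (((k : ℝ) + 1) ^ m * r ^ (k + 1)) := by ring
    have hSsummable : ∀ m : ℕ, Summable (fun k : ℕ => Sk P (k + 1) * ((k : ℂ) + 1) ^ m) := by
      intro m
      apply Summable.of_norm_bounded (g := fun k : ℕ => N * (((k : ℝ) + 1) ^ m * r ^ (k + 1)))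
        ((hgeo m).mul_left N)
      intro k
      rw [norm_mul, norm_pow]
      have h3 : ‖((k : ℂ) + 1)‖ = (k : ℝ) + 1 := by
        rw [show ((k : ℂ) + 1) = ((k + 1 : ℕ) : ℂ) by push_cast; ring, Complex.norm_natCast]
        push_cast; ring
      rw [h3]
      calc ‖Sk P (k + 1)‖ * ((k : ℝ) + 1) ^ m
          ≤ (N * r ^ (k + 1)) * ((k : ℝ) + 1) ^ m := by
            apply mul_le_mul_of_nonneg_right (hSk_bound k) (by positivity)
        _ = N * (((k : ℝ) + 1) ^ m * r ^ (k + 1)) := by ring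
    have hfibers : ∀ m : ℕ, HasSum (fun k => Fbig (m, k))
        ((Complex.I * θ) ^ (m + 1) / ((m + 1).factorial : ℂ) *
          (Am P (m + 1) + Bm P (m + 1))) := by
      intro m
      have hAm : HasSum (fun k : ℕ => Tk P (k + 1) * ((k : ℂ) + 1) ^ m) (Am P (m + 1)) := by
        have : Am P (m + 1) = ∑' k : ℕ, Tk P (k + 1) * ((k : ℂ) + 1) ^ m := by
          rw [Am]
          simp only [Nat.add_sub_cancel]
        rw [this]
        exact (hTsummable m).hasSum
      have hBm : HasSum (fun k : ℕ => (-1) ^ (m + 1) * (Sk P (k + 1) * ((k : ℂ) + 1) ^ m))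
          (Bm P (m + 1)) := by
        have : Bm P (m + 1) = (-1) ^ (m + 1) * ∑' k : ℕ, Sk P (k + 1) * ((k : ℂ) + 1) ^ m := by
          rw [Bm]
          simp only [Nat.add_sub_cancel]
        rw [this]
        exact (hSsummable m).hasSum.mul_left _
      exact (hAm.add hBm).mul_left _
    have Hmain : HasSum (fun m : ℕ => (Complex.I * θ) ^ (m + 1) / ((m + 1).factorial : ℂ) *
        (Am P (m + 1) + Bm P (m + 1))) (TO + TI) :=
      HFbig.prod_fiberwise hfibers
    -- ### evaluation chain
    have hprodIn : ((sIn.map fun ζ => Complex.exp (Complex.I * θ) - ζ)).prod =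
        ((sIn.map fun ζ => (1 : ℂ) - ζ)).prod *
          (Complex.exp (Complex.I * θ) ^ (Multiset.card sIn) * Complex.exp (-TI)) := by
      rw [Multiset.map_congr rfl (fun ζ hζ => (hIN ζ hζ).2)]
      rw [Multiset.prod_map_mul, Multiset.prod_map_mul]
      congr 1
      congr 1
      · rw [Multiset.map_const', Multiset.prod_replicate]
      · rw [hTI_def]
        exact multiset_prod_exp_neg sIn (fun ζ => EI ζ θ)
    have hprodOut : ((sOut.map fun ζ => Complex.exp (Complex.I * θ) - ζ)).prod =
        ((sOut.map fun ζ => (1 : ℂ) - ζ)).prod * Complex.exp (-TO) := by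
      rw [Multiset.map_congr rfl (fun ζ hζ => (hON ζ hζ).2)]
      rw [Multiset.prod_map_mul]
      congr 1
      rw [hTO_def]
      exact multiset_prod_exp_neg sOut (fun ζ => EO ζ θ)
    have heval : P.eval (Complex.exp (Complex.I * θ)) =
        Complex.exp (Complex.I * θ) ^ (Multiset.card sIn) *
          (Complex.exp (-TI) * Complex.exp (-TO)) := by
      rw [hfac]
      rw [← hsplit, Multiset.map_add, Multiset.prod_add, hprodIn, hprodOut]
      have hone : P.leadingCoeff * (((sIn.map fun ζ => (1 : ℂ) - ζ)).prod *
          ((sOut.map fun ζ => (1 : ℂ) - ζ)).prod) = 1 := by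
        rw [← Multiset.prod_add, ← Multiset.map_add, hsplit]
        exact hProd1
      calc P.leadingCoeff *
            (((sIn.map fun ζ => (1 : ℂ) - ζ)).prod *
                (Complex.exp (Complex.I * θ) ^ (Multiset.card sIn) * Complex.exp (-TI)) *
              (((sOut.map fun ζ => (1 : ℂ) - ζ)).prod * Complex.exp (-TO)))
          = (P.leadingCoeff * (((sIn.map fun ζ => (1 : ℂ) - ζ)).prod *
              ((sOut.map fun ζ => (1 : ℂ) - ζ)).prod)) *
            (Complex.exp (Complex.I * θ) ^ (Multiset.card sIn) *
              (Complex.exp (-TI) * Complex.exp (-TO))) := by ring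
        _ = _ := by rw [hone, one_mul]
    have hRnum : (Rnum P : ℂ) = (Multiset.card sIn : ℂ) := by rw [Rnum]
    rw [heval, Hmain.tsum_eq]
    rw [← Complex.exp_nat_mul, ← Complex.exp_add, ← Complex.exp_add]
    congr 1
    rw [hRnum]
    ring
  · -- ### the Weierstrass bound
    refine ⟨fun p => 2 * (Multiset.card P.roots : ℝ) *
      (ε ^ (p.1 + 1) * ((p.2 : ℝ) + 1) ^ p.1 * r ^ (p.2 + 1) / ((p.1 + 1).factorial : ℝ)),
      (master_summable hr0 hε hεr).mul_left _, ?_⟩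
    intro θ hθabs p
    rcases p with ⟨m, k⟩
    set N : ℝ := (Multiset.card P.roots : ℝ) with hN_def
    have hN0 : 0 ≤ N := by positivity
    have hTk_bound : ‖Tk P (k + 1)‖ ≤ N * r ^ (k + 1) := by
      have := multiset_sum_abs_le (P.roots.filter (fun ζ => 1 < ‖ζ‖))
        (fun ζ => (ζ ^ (k + 1))⁻¹) (r ^ (k + 1))
        (by positivity) (fun ζ hζ => by
          rw [norm_inv, norm_pow, ← inv_pow]
          exact pow_le_pow_left₀ (by positivity) (hrOut ζ hζ) (k + 1))
      refine le_trans this ?_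
      apply mul_le_mul_of_nonneg_right _ (by positivity)
      have : Multiset.card (P.roots.filter (fun ζ => 1 < ‖ζ‖)) ≤
          Multiset.card P.roots := Multiset.card_le_card (Multiset.filter_le _ _)
      rw [hN_def]
      exact_mod_cast this
    have hSk_bound : ‖Sk P (k + 1)‖ ≤ N * r ^ (k + 1) := by
      have := multiset_sum_abs_le (P.roots.filter (fun ζ => ‖ζ‖ < 1))
        (fun ζ => ζ ^ (k + 1)) (r ^ (k + 1))
        (by positivity) (fun ζ hζ => by
          rw [norm_pow]
          exact pow_le_pow_left₀ (norm_nonneg _) (hrIn ζ hζ) (k + 1))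
      refine le_trans this ?_
      apply mul_le_mul_of_nonneg_right _ (by positivity)
      have : Multiset.card (P.roots.filter (fun ζ => ‖ζ‖ < 1)) ≤
          Multiset.card P.roots := Multiset.card_le_card (Multiset.filter_le _ _)
      rw [hN_def]
      exact_mod_cast this
    have h3 : ‖(k : ℂ) + 1‖ = (k : ℝ) + 1 := by
      rw [show ((k : ℂ) + 1) = ((k + 1 : ℕ) : ℂ) by push_cast; ring, Complex.norm_natCast]
      push_cast; ring
    have hc : ‖(Complex.I * θ) ^ (m + 1) / ((m + 1).factorial : ℂ)‖ ≤
        ε ^ (m + 1) / ((m + 1).factorial : ℝ) := by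
      rw [norm_div, norm_pow, norm_mul, Complex.norm_I, one_mul, Complex.norm_natCast]
      gcongr
    rw [norm_mul]
    have hinner : ‖Tk P (k + 1) * ((k : ℂ) + 1) ^ m +
        (-1) ^ (m + 1) * Sk P (k + 1) * ((k : ℂ) + 1) ^ m‖ ≤
        2 * N * (((k : ℝ) + 1) ^ m * r ^ (k + 1)) := by
      calc ‖Tk P (k + 1) * ((k : ℂ) + 1) ^ m +
            (-1) ^ (m + 1) * Sk P (k + 1) * ((k : ℂ) + 1) ^ m‖
          ≤ ‖Tk P (k + 1) * ((k : ℂ) + 1) ^ m‖ +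
            ‖(-1) ^ (m + 1) * Sk P (k + 1) * ((k : ℂ) + 1) ^ m‖ :=
            norm_add_le _ _
        _ ≤ N * r ^ (k + 1) * ((k : ℝ) + 1) ^ m + N * r ^ (k + 1) * ((k : ℝ) + 1) ^ m := by
            apply add_le_add
            · rw [norm_mul, norm_pow, h3]
              apply mul_le_mul_of_nonneg_right hTk_bound (by positivity)
            · rw [norm_mul, norm_mul, norm_pow, norm_pow, norm_neg, norm_one, one_pow,
                one_mul, h3]
              apply mul_le_mul_of_nonneg_right hSk_bound (by positivity)
        _ = 2 * N * (((k : ℝ) + 1) ^ m * r ^ (k + 1)) := by ring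
    calc ‖(Complex.I * θ) ^ (m + 1) / ((m + 1).factorial : ℂ)‖ *
          ‖Tk P (k + 1) * ((k : ℂ) + 1) ^ m +
            (-1) ^ (m + 1) * Sk P (k + 1) * ((k : ℂ) + 1) ^ m‖
        ≤ (ε ^ (m + 1) / ((m + 1).factorial : ℝ)) *
            (2 * N * (((k : ℝ) + 1) ^ m * r ^ (k + 1))) := by
          apply mul_le_mul hc hinner (norm_nonneg _) (by positivity)
      _ = 2 * N * (ε ^ (m + 1) * ((k : ℝ) + 1) ^ m * r ^ (k + 1) /
            ((m + 1).factorial : ℝ)) := by ring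
end

section
/- Let δ > 0 and let X be a random variable taking values in {0,1,…,n} with probability generating function P whose roots ζ all satisfy |1 − ζ| > δ and |ζ| ≠ 1. Then the cumulant generating function t ↦ log E[e^{tX}] is analytic in a neighbourhood of t = 0, and its m-th cumulant (the m-th derivative of log E[e^{tX}] at t = 0) equals −(A_m + B_m) for each m ≥ 2, and equals R − A_1 − B_1 for m = 1, where A_m = Σ_{k≥1} T_k k^{m−1}, B_m = (−1)^m Σ_{k≥1} S_k k^{m−1}, T_k = Σ_{ζ root of P, |ζ| > 1} ζ^{-k}, S_k = Σ_{ζ root of P, |ζ| < 1} ζ^k, and R is the number of roots of P with |ζ| < 1 counted with multiplicity. -/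
set_option maxHeartbeats 1600000


open MeasureTheory ProbabilityTheory Polynomial Filter Topology
open scoped Classical

namespace CumulantAux



lemma multiset_sum_norm_le (s : Multiset ℂ) (g : ℂ → ℂ) (b : ℝ) (hb : 0 ≤ b)
    (h : ∀ ζ ∈ s, ‖g ζ‖ ≤ b) : ‖(s.map g).sum‖ ≤ (Multiset.card s : ℝ) * b := by
  induction s using Multiset.induction with
  | empty => simp
  | cons a s ih =>
      simp only [Multiset.map_cons, Multiset.sum_cons, Multiset.card_cons]
      calc ‖g a + (s.map g).sum‖ ≤ ‖g a‖ + ‖(s.map g).sum‖ := norm_add_le _ _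
        _ ≤ b + (Multiset.card s : ℝ) * b :=
          add_le_add (h a (Multiset.mem_cons_self a s))
            (ih fun ζ hζ => h ζ (Multiset.mem_cons_of_mem hζ))
        _ = ((Multiset.card s + 1 : ℕ) : ℝ) * b := by push_cast; ring

lemma multiset_summable_sum (s : Multiset ℂ) (g : ℂ → ℕ → ℂ)
    (hg : ∀ ζ ∈ s, Summable (g ζ)) :
    Summable (fun j => (s.map (fun ζ => g ζ j)).sum) := by
  induction s using Multiset.induction with
  | empty => simpa using summable_zero
  | cons a s ih =>
      simpa using (hg a (Multiset.mem_cons_self a s)).add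
        (ih fun ζ hζ => hg ζ (Multiset.mem_cons_of_mem hζ))

lemma multiset_tsum_sum (s : Multiset ℂ) (g : ℂ → ℕ → ℂ)
    (hg : ∀ ζ ∈ s, Summable (g ζ)) :
    (s.map (fun ζ => ∑' j, g ζ j)).sum = ∑' j, (s.map (fun ζ => g ζ j)).sum := by
  induction s using Multiset.induction with
  | empty => simp
  | cons a s ih =>
      rw [Multiset.map_cons, Multiset.sum_cons,
        ih (fun ζ hζ => hg ζ (Multiset.mem_cons_of_mem hζ)),
        ← Summable.tsum_add (hg a (Multiset.mem_cons_self a s))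
          (multiset_summable_sum s g (fun ζ hζ => hg ζ (Multiset.mem_cons_of_mem hζ)))]
      exact tsum_congr fun j => by simp

lemma prod_X_sub_C_deriv (s : Multiset ℂ) (z : ℂ) (hz : ∀ ζ ∈ s, z ≠ ζ) :
    ((s.map fun ζ => X - C ζ).prod).derivative.eval z
      = ((s.map fun ζ => X - C ζ).prod).eval z * (s.map fun ζ => (z - ζ)⁻¹).sum := by
  induction s using Multiset.induction with
  | empty => simp
  | cons a s ih =>
      have ha : z - a ≠ 0 := sub_ne_zero.mpr (hz a (Multiset.mem_cons_self a s))
      have ih' := ih fun ζ hζ => hz ζ (Multiset.mem_cons_of_mem hζ)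
      simp only [Multiset.map_cons, Multiset.prod_cons, Multiset.sum_cons, derivative_mul,
        eval_add, eval_mul, eval_sub, eval_X, eval_C, derivative_sub, derivative_X,
        derivative_C, eval_one, eval_zero, ih']
      field_simp
      ring

lemma iteratedDeriv_eq_of_hasDerivAt (G : ℕ → ℝ → ℂ) (s : Set ℝ) (hs : IsOpen s)
    (h : ∀ p, ∀ t ∈ s, HasDerivAt (G p) (G (p + 1) t) t) :
    ∀ p, ∀ t ∈ s, iteratedDeriv p (G 0) t = G p t := by
  intro p
  induction p with
  | zero => intro t _; simp
  | succ p ih =>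
    intro t ht
    rw [iteratedDeriv_succ]
    have h1 : deriv (iteratedDeriv p (G 0)) t = deriv (G p) t := by
      apply Filter.EventuallyEq.deriv_eq
      filter_upwards [hs.mem_nhds ht] with y hy using ih y hy
    rw [h1, (h p t ht).deriv]

lemma iteratedDeriv_ofReal (f : ℝ → ℝ) (hf : ∀ q, Differentiable ℝ (iteratedDeriv q f)) :
    ∀ (p : ℕ) (x : ℝ), iteratedDeriv p (fun t => ((f t : ℝ) : ℂ)) x
      = ((iteratedDeriv p f x : ℝ) : ℂ) := by
  intro p
  induction p with
  | zero => intro x; simp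
  | succ p ih =>
    intro x
    rw [iteratedDeriv_succ, iteratedDeriv_succ]
    have h1 : iteratedDeriv p (fun t => ((f t : ℝ) : ℂ))
        = fun t => ((iteratedDeriv p f t : ℝ) : ℂ) := funext fun t => ih t
    rw [h1, ((hf p x).hasDerivAt.ofReal_comp).deriv]




lemma hasDerivAt_series (a : ℕ → ℂ) (c C r ε : ℝ) (hc : |c| = 1) (hr : 0 ≤ r) (hε : 0 < ε)
    (hC : 0 ≤ C) (ha : ∀ j, ‖a j‖ ≤ C * r ^ (j + 1)) (hrε : r * Real.exp ε < 1) (p : ℕ) :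
    ∀ t ∈ Metric.ball (0 : ℝ) ε,
      HasDerivAt
        (fun t : ℝ => ∑' j : ℕ, a j * ((c : ℂ) * ((j : ℂ) + 1)) ^ p
            * Complex.exp ((c : ℂ) * ((j : ℂ) + 1) * t))
        (∑' j : ℕ, a j * ((c : ℂ) * ((j : ℂ) + 1)) ^ (p + 1)
            * Complex.exp ((c : ℂ) * ((j : ℂ) + 1) * t)) t := by
  intro t ht
  have hre : 0 ≤ r * Real.exp ε := mul_nonneg hr (Real.exp_pos _).le
  -- norms of the basic quantities
  have habs : ∀ (j : ℕ) (q : ℕ) (y : ℝ), y ∈ Metric.ball (0 : ℝ) ε →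
      ‖a j * ((c : ℂ) * ((j : ℂ) + 1)) ^ q * Complex.exp ((c : ℂ) * ((j : ℂ) + 1) * y)‖
        ≤ C * ((j : ℝ) + 1) ^ q * (r * Real.exp ε) ^ (j + 1) := by
    intro j q y hy
    have hy' : |y| < ε := by simpa [Real.dist_eq] using hy
    have h1 : ‖((c : ℂ) * ((j : ℂ) + 1)) ^ q‖ = ((j : ℝ) + 1) ^ q := by
      have e : ((c : ℂ) * ((j : ℂ) + 1)) = ((c * ((j : ℝ) + 1) : ℝ) : ℂ) := by push_cast; ring
      rw [e, norm_pow, Complex.norm_real, Real.norm_eq_abs, abs_mul, hc, one_mul,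
        abs_of_nonneg (by positivity : (0:ℝ) ≤ (j : ℝ) + 1)]
    have h2 : ‖Complex.exp ((c : ℂ) * ((j : ℂ) + 1) * y)‖ ≤ Real.exp ε ^ (j + 1) := by
      have e : ((c : ℂ) * ((j : ℂ) + 1) * y) = ((c * ((j : ℝ) + 1) * y : ℝ) : ℂ) := by
        push_cast; ring
      rw [e, Complex.norm_exp]
      simp only [Complex.ofReal_re]
      rw [← Real.exp_nat_mul]
      apply Real.exp_le_exp.2
      have hb : c * ((j : ℝ) + 1) * y ≤ |c * ((j : ℝ) + 1) * y| := le_abs_self _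
      refine hb.trans ?_
      rw [abs_mul, abs_mul, hc, one_mul, abs_of_nonneg (by positivity : (0:ℝ) ≤ (j : ℝ) + 1)]
      have hb2 : ((j : ℝ) + 1) * |y| ≤ ((j : ℝ) + 1) * ε :=
        mul_le_mul_of_nonneg_left hy'.le (by positivity)
      refine hb2.trans_eq ?_
      push_cast; ring
    rw [norm_mul, norm_mul, h1]
    calc ‖a j‖ * ((j : ℝ) + 1) ^ q * ‖Complex.exp ((c : ℂ) * ((j : ℂ) + 1) * y)‖
        ≤ (C * r ^ (j + 1)) * (((j : ℝ) + 1) ^ q) * Real.exp ε ^ (j + 1) := by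
          gcongr
          all_goals first | exact ha j | exact h2
      _ = C * ((j : ℝ) + 1) ^ q * (r * Real.exp ε) ^ (j + 1) := by rw [mul_pow]; ring
  -- summability of bounds
  have hsum : ∀ q : ℕ, Summable (fun j : ℕ => C * ((j : ℝ) + 1) ^ q * (r * Real.exp ε) ^ (j + 1)) := by
    intro q
    have h0 : Summable (fun j : ℕ => (j : ℝ) ^ q * (r * Real.exp ε) ^ j) :=
      summable_pow_mul_geometric_of_norm_lt_one q (by rwa [Real.norm_eq_abs, abs_of_nonneg hre])
    have h1 : Summable (fun j : ℕ => ((j + 1 : ℕ) : ℝ) ^ q * (r * Real.exp ε) ^ (j + 1)) :=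
      (summable_nat_add_iff 1).2 h0
    exact (h1.mul_left C).congr fun j => by push_cast; ring
  -- each term has a derivative
  have hterm : ∀ (q : ℕ) (j : ℕ) (y : ℝ),
      HasDerivAt (fun y : ℝ => a j * ((c : ℂ) * ((j : ℂ) + 1)) ^ q
          * Complex.exp ((c : ℂ) * ((j : ℂ) + 1) * y))
        (a j * ((c : ℂ) * ((j : ℂ) + 1)) ^ (q + 1)
          * Complex.exp ((c : ℂ) * ((j : ℂ) + 1) * y)) y := by
    intro q j y
    have h1 : HasDerivAt (fun y : ℝ => (y : ℂ)) 1 y := by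
      exact Complex.ofRealCLM.hasDerivAt (x := y)
    have h2 : HasDerivAt (fun y : ℝ => (c : ℂ) * ((j : ℂ) + 1) * y)
        ((c : ℂ) * ((j : ℂ) + 1)) y := by
      simpa using h1.const_mul ((c : ℂ) * ((j : ℂ) + 1))
    have h3 := h2.cexp
    have h4 := h3.const_mul (a j * ((c : ℂ) * ((j : ℂ) + 1)) ^ q)
    refine h4.congr_deriv ?_
    rw [pow_succ]
    ring
  -- apply the tsum derivative theorem
  have := hasDerivAt_tsum_of_isPreconnected (hsum (p + 1)) Metric.isOpen_ball
    (convex_ball (0:ℝ) ε).isPreconnected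
    (fun j y _ => hterm p j y)
    (fun j y hy => habs j (p + 1) y hy)
    (Metric.mem_ball_self hε)
    (Summable.of_norm_bounded (hsum p) (fun j => habs j p 0 (Metric.mem_ball_self hε)))
    ht
  exact this




section Meas
variable {Ω : Type} [MeasurableSpace Ω] (μ : Measure Ω) [IsProbabilityMeasure μ]
  (X : Ω → ℝ) (n : ℕ)

lemma meas_level (hmeas : Measurable X) (k : ℕ) : MeasurableSet {ω | X ω = (k : ℝ)} :=
  hmeas (measurableSet_singleton ((k : ℝ)))

lemma sum_p_eq_one (hmeas : Measurable X) (hval : ∀ ω, ∃ k : ℕ, k ≤ n ∧ X ω = k) :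
    ∑ k ∈ Finset.range (n + 1), (μ {ω | X ω = (k : ℝ)}).toReal = 1 := by
  have hdisj : (↑(Finset.range (n + 1)) : Set ℕ).PairwiseDisjoint
      (fun k : ℕ => {ω | X ω = (k : ℝ)}) := by
    intro a _ b _ hab
    refine Set.disjoint_left.2 fun ω ha hb => hab ?_
    exact_mod_cast (ha.symm.trans hb : ((a : ℝ)) = b)
  have hcover : (⋃ k ∈ Finset.range (n + 1), {ω | X ω = (k : ℝ)}) = Set.univ := by
    ext ω
    simp only [Set.mem_iUnion, Set.mem_setOf_eq, Set.mem_univ, iff_true, Finset.mem_range]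
    obtain ⟨k, hk, hXk⟩ := hval ω
    exact ⟨k, by omega, hXk⟩
  have := measure_biUnion_finset (μ := μ) hdisj (fun k _ => meas_level X hmeas k)
  rw [hcover, measure_univ] at this
  rw [← ENNReal.toReal_sum (fun k _ => measure_ne_top μ _), ← this]
  simp

lemma integral_exp_eq (hmeas : Measurable X) (hval : ∀ ω, ∃ k : ℕ, k ≤ n ∧ X ω = k) (t : ℝ) :
    ∫ ω, Real.exp (t * X ω) ∂μ
      = ∑ k ∈ Finset.range (n + 1), (μ {ω | X ω = (k : ℝ)}).toReal * Real.exp (t * k) := by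
  have hfun : (fun ω => Real.exp (t * X ω))
      = fun ω => ∑ k ∈ Finset.range (n + 1),
          Set.indicator {ω | X ω = (k : ℝ)} (fun _ => Real.exp (t * k)) ω := by
    funext ω
    obtain ⟨k₀, hk₀, hXk₀⟩ := hval ω
    rw [Finset.sum_eq_single_of_mem k₀ (Finset.mem_range.2 (by omega))]
    · rw [Set.indicator_of_mem (by simpa using hXk₀), hXk₀]
    · intro b _ hb
      apply Set.indicator_of_notMem
      simp only [Set.mem_setOf_eq, hXk₀]
      exact_mod_cast fun h => hb (by exact_mod_cast h.symm)
  rw [hfun, integral_finset_sum]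
  · refine Finset.sum_congr rfl fun k _ => ?_
    rw [integral_indicator_const _ (meas_level X hmeas k)]
    simp [mul_comm, measureReal_def]
  · intro k _
    exact (integrable_const _).indicator (meas_level X hmeas k)




end Meas

lemma eval_sum_poly (q : ℕ → ℝ) (n : ℕ) (x : ℂ) :
    (∑ k ∈ Finset.range (n + 1), C ((q k : ℝ) : ℂ) * X ^ k).eval x
      = ∑ k ∈ Finset.range (n + 1), ((q k : ℝ) : ℂ) * x ^ k := by
  simp [eval_finset_sum]

lemma deriv_eval_sum_poly (q : ℕ → ℝ) (n : ℕ) (x : ℂ) :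
    x * (derivative (∑ k ∈ Finset.range (n + 1), C ((q k : ℝ) : ℂ) * X ^ k)).eval x
      = ∑ k ∈ Finset.range (n + 1), ((q k : ℝ) : ℂ) * k * x ^ k := by
  rw [derivative_sum]
  simp only [derivative_C_mul_X_pow, eval_finset_sum, eval_mul, eval_pow, eval_C, eval_X]
  rw [Finset.mul_sum]
  refine Finset.sum_congr rfl fun k _ => ?_
  rcases Nat.eq_zero_or_pos k with hk | hk
  · simp [hk]
  · have hk1 : k - 1 + 1 = k := by omega
    calc x * (((q k : ℝ) : ℂ) * (k : ℂ) * x ^ (k - 1))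
        = ((q k : ℝ) : ℂ) * (k : ℂ) * (x ^ (k - 1) * x) := by ring
      _ = ((q k : ℝ) : ℂ) * (k : ℂ) * x ^ k := by rw [← pow_succ, hk1]

lemma analytic_log_comp (f : ℝ → ℝ) (hf : ∀ t, AnalyticAt ℝ f t) (hpos : ∀ t, 0 < f t) :
    ∀ t, AnalyticAt ℝ (fun t => Real.log (f t)) t := by
  intro t
  have h1 : AnalyticAt ℝ (fun t : ℝ => ((f t : ℝ) : ℂ)) t :=
    (Complex.ofRealCLM.analyticAt _).comp (hf t)
  have h2 : AnalyticAt ℝ (fun t : ℝ => Complex.log ((f t : ℝ) : ℂ)) t := by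
    have hg : AnalyticAt ℝ Complex.log (((f t : ℝ) : ℂ)) :=
      (analyticAt_clog (Complex.ofReal_mem_slitPlane.2 (hpos t))).restrictScalars (𝕜 := ℝ)
    exact AnalyticAt.comp (f := fun t : ℝ => ((f t : ℝ) : ℂ)) (x := t) hg h1
  have h3 : AnalyticAt ℝ (fun t : ℝ => (Complex.log ((f t : ℝ) : ℂ)).re) t :=
    (Complex.reCLM.analyticAt _).comp h2
  have he : (fun t : ℝ => (Complex.log ((f t : ℝ) : ℂ)).re) = fun t => Real.log (f t) :=
    funext fun y => Complex.log_ofReal_re (f y)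
  rwa [he] at h3




lemma summable_big (x ζ : ℂ) (h : ‖x / ζ‖ < 1) :
    Summable (fun j : ℕ => (ζ ^ (j + 1))⁻¹ * x ^ (j + 1)) := by
  have h1 : Summable (fun j : ℕ => (x / ζ) ^ (j + 1)) := by
    simp only [pow_succ']
    exact (summable_geometric_of_norm_lt_one h).mul_left _
  exact h1.congr fun j => by rw [div_pow, div_eq_mul_inv, mul_comm]

lemma summable_small (x ζ : ℂ) (h : ‖ζ / x‖ < 1) :
    Summable (fun j : ℕ => ζ ^ (j + 1) * (x ^ (j + 1))⁻¹) := by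
  have h1 : Summable (fun j : ℕ => (ζ / x) ^ (j + 1)) := by
    simp only [pow_succ']
    exact (summable_geometric_of_norm_lt_one h).mul_left _
  exact h1.congr fun j => by rw [div_pow, div_eq_mul_inv]

lemma big_root_expand (x ζ : ℂ) (hζ : ζ ≠ 0) (h : ‖x / ζ‖ < 1) :
    x / (x - ζ) = -∑' j : ℕ, (ζ ^ (j + 1))⁻¹ * x ^ (j + 1) := by
  have hne : x ≠ ζ := by
    intro he
    rw [he, div_self hζ] at h
    simp at h
  have hxζ : x - ζ ≠ 0 := sub_ne_zero.mpr hne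
  have h1 : ∑' j : ℕ, (ζ ^ (j + 1))⁻¹ * x ^ (j + 1) = (x / ζ) * (1 - x / ζ)⁻¹ := by
    rw [show (fun j : ℕ => (ζ ^ (j + 1))⁻¹ * x ^ (j + 1))
        = fun j : ℕ => (x / ζ) * (x / ζ) ^ j from funext fun j => by
      rw [← pow_succ', div_pow, div_eq_mul_inv, mul_comm]]
    rw [tsum_mul_left, tsum_geometric_of_norm_lt_one h]
  have h2 : -x + ζ ≠ 0 := fun hh => hxζ (by linear_combination -hh)
  rw [h1]
  field_simp
  ring_nf

lemma small_root_expand (x ζ : ℂ) (hx : x ≠ 0) (h : ‖ζ / x‖ < 1) :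
    x / (x - ζ) = 1 + ∑' j : ℕ, ζ ^ (j + 1) * (x ^ (j + 1))⁻¹ := by
  have hne : x ≠ ζ := by
    intro he
    rw [← he, div_self hx] at h
    simp at h
  have hxζ : x - ζ ≠ 0 := sub_ne_zero.mpr hne
  have h0 : ∑' j : ℕ, (ζ / x) ^ j = (1 - ζ / x)⁻¹ := tsum_geometric_of_norm_lt_one h
  rw [Summable.tsum_eq_zero_add (f := fun j : ℕ => (ζ / x) ^ j) (summable_geometric_of_norm_lt_one h)] at h0
  simp only [pow_zero] at h0
  have h1 : ∑' j : ℕ, ζ ^ (j + 1) * (x ^ (j + 1))⁻¹ = ∑' j : ℕ, (ζ / x) ^ (j + 1) :=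
    tsum_congr fun j => by rw [div_pow, div_eq_mul_inv]
  rw [h1, h0]
  rw [one_sub_div hx, inv_div]

end CumulantAux

/-- **Corollary 8 (cumulants from roots).**  If every root `ζ` of the probability
generating function `P` of `X ∈ {0,…,n}` satisfies `|1 - ζ| > δ` and `|ζ| ≠ 1`, then the
cumulant generating function `t ↦ log 𝔼[e^{tX}]` is analytic near `t = 0`, its `m`-th
derivative at `0` equals `-(A_m + B_m)` for `m ≥ 2`, and its first derivative at `0`
equals `R - A_1 - B_1`. -/
theorem cumulants_from_roots
    (δ : ℝ) (hδ : 0 < δ) (n : ℕ)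
    (Ω : Type) [MeasurableSpace Ω] (μ : Measure Ω) [IsProbabilityMeasure μ]
    (X : Ω → ℝ) (hmeas : Measurable X)
    (hval : ∀ ω, ∃ k : ℕ, k ≤ n ∧ X ω = k)
    (P : Polynomial ℂ) (hP : P = pgf μ X n)
    (hroots : ∀ ζ ∈ P.roots, δ < ‖1 - ζ‖ ∧ ‖ζ‖ ≠ 1)
    (K : ℝ → ℝ) (hK : ∀ t, K t = Real.log (∫ ω, Real.exp (t * X ω) ∂ μ)) :
    ∃ ε > (0 : ℝ),
      AnalyticOnNhd ℝ K (Metric.ball 0 ε) ∧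
      (∀ m : ℕ, 2 ≤ m → ((iteratedDeriv m K 0 : ℝ) : ℂ) = -(Am P m + Bm P m)) ∧
      (((iteratedDeriv 1 K 0 : ℝ) : ℂ) = (Rnum P : ℂ) - Am P 1 - Bm P 1) := by
  classical
  set q : ℕ → ℝ := fun k => (μ {ω | X ω = (k : ℝ)}).toReal with hqdef
  set f : ℝ → ℝ := fun t => ∑ k ∈ Finset.range (n + 1), q k * Real.exp (t * k) with hfdef
  set f' : ℝ → ℝ := fun t => ∑ k ∈ Finset.range (n + 1), q k * (k * Real.exp (t * k)) with hf'def
  have hq0 : ∀ k, 0 ≤ q k := fun k => ENNReal.toReal_nonneg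
  have hsum1 : ∑ k ∈ Finset.range (n + 1), q k = 1 := CumulantAux.sum_p_eq_one μ X n hmeas hval
  have hKf : K = fun t => Real.log (f t) := by
    funext t; rw [hK t, CumulantAux.integral_exp_eq μ X n hmeas hval t]
  have hfpos : ∀ t, 0 < f t := by
    intro t
    have hex : ∃ k ∈ Finset.range (n + 1), 0 < q k * Real.exp (t * k) := by
      by_contra hcon
      push_neg at hcon
      have hz : ∀ k ∈ Finset.range (n + 1), q k = 0 := by
        intro k hk
        have h1 := hcon k hk
        have h3 : q k * Real.exp (t * k) = 0 :=
          le_antisymm h1 (mul_nonneg (hq0 k) (Real.exp_pos _).le)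
        rcases mul_eq_zero.1 h3 with h | h
        · exact h
        · exact absurd h (Real.exp_pos _).ne'
      rw [Finset.sum_eq_zero hz] at hsum1; norm_num at hsum1
    exact Finset.sum_pos' (fun k _ => mul_nonneg (hq0 k) (Real.exp_pos _).le) hex
  have hfan : ∀ t, AnalyticAt ℝ f t := by
    intro t
    apply Finset.analyticAt_fun_sum
    intro k _
    have h1 : AnalyticAt ℝ (fun t : ℝ => t * (k : ℝ)) t :=
      (analyticAt_id.mul analyticAt_const)
    exact analyticAt_const.mul (analyticAt_rexp.comp h1)
  have hKan : ∀ t, AnalyticAt ℝ K t := by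
    rw [hKf]; exact CumulantAux.analytic_log_comp f hfan hfpos
  have hfderiv : ∀ t, HasDerivAt f (f' t) t := by
    intro t
    apply HasDerivAt.fun_sum
    intro k _
    have h1 : HasDerivAt (fun t : ℝ => t * (k : ℝ)) (k : ℝ) t := hasDerivAt_mul_const _
    have h2 := (h1.exp).const_mul (q k)
    refine h2.congr_deriv ?_
    ring
  have hKderiv : ∀ t, deriv K t = f' t / f t := by
    intro t
    rw [hKf]
    exact ((hfderiv t).log (hfpos t).ne').deriv
  -- the polynomial
  have hpgf : P = ∑ k ∈ Finset.range (n + 1), C ((q k : ℝ) : ℂ) * Polynomial.X ^ k := by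
    rw [hP]; rfl
  have hP1 : P.eval 1 = 1 := by
    rw [hpgf, CumulantAux.eval_sum_poly q n 1]
    simp only [one_pow, mul_one]
    rw [← Complex.ofReal_sum]
    exact_mod_cast congrArg (fun r : ℝ => (r : ℂ)) hsum1
  have hPne : P ≠ 0 := by
    intro h0; rw [h0] at hP1; simp at hP1
  -- roots
  set big := P.roots.filter (fun ζ => 1 < ‖ζ‖) with hbigdef
  set small := P.roots.filter (fun ζ => ‖ζ‖ < 1) with hsmalldef
  have hbig' : big = Multiset.filter (fun a => ¬ ‖a‖ < 1) P.roots := by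
    rw [hbigdef]
    apply Multiset.filter_congr
    intro ζ hζ
    have h2 := (hroots ζ hζ).2
    constructor
    · intro h; exact not_lt.2 h.le
    · intro h; exact lt_of_le_of_ne (not_lt.1 h) (Ne.symm h2)
  have hsplit : small + big = P.roots := by
    rw [hsmalldef, hbig']
    exact Multiset.filter_add_not _ _
  have hTk : ∀ k, Tk P k = (big.map (fun ζ => (ζ ^ k)⁻¹)).sum := fun k => rfl
  have hSk : ∀ k, Sk P k = (small.map (fun ζ => ζ ^ k)).sum := fun k => rfl
  have hRnum : (Rnum P : ℂ) = (Multiset.card small : ℂ) := rfl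
  -- uniform bound on root moduli
  obtain ⟨ρ, hρpos, hρlt, hρbig, hρsmall⟩ :
      ∃ ρ : ℝ, 0 < ρ ∧ ρ < 1 ∧ (∀ ζ ∈ big, (‖ζ‖)⁻¹ ≤ ρ)
        ∧ (∀ ζ ∈ small, ‖ζ‖ ≤ ρ) := by
    set F := big.toFinset.image (fun ζ => (‖ζ‖)⁻¹) ∪ small.toFinset.image (fun ζ : ℂ => ‖ζ‖)
      with hFdef
    set G := insert (1/2 : ℝ) F with hGdef
    have hGne : G.Nonempty := Finset.insert_nonempty _ _
    refine ⟨G.max' hGne, ?_, ?_, ?_, ?_⟩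
    · have h1 : (1/2 : ℝ) ≤ G.max' hGne := Finset.le_max' _ _ (Finset.mem_insert_self _ _)
      linarith
    · rw [Finset.max'_lt_iff]
      intro x hx
      rcases Finset.mem_insert.1 hx with h | h
      · rw [h]; norm_num
      · rcases Finset.mem_union.1 h with h | h
        · obtain ⟨ζ, hζ, rfl⟩ := Finset.mem_image.1 h
          have h1 : 1 < ‖ζ‖ :=
            (Multiset.mem_filter.1 (Multiset.mem_toFinset.1 hζ)).2
          exact inv_lt_one_of_one_lt₀ h1
        · obtain ⟨ζ, hζ, rfl⟩ := Finset.mem_image.1 h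
          exact (Multiset.mem_filter.1 (Multiset.mem_toFinset.1 hζ)).2
    · intro ζ hζ
      exact Finset.le_max' G ((‖ζ‖)⁻¹) (Finset.mem_insert_of_mem
        (Finset.mem_union_left _
          (Finset.mem_image_of_mem (fun ζ => (‖ζ‖)⁻¹) (Multiset.mem_toFinset.2 hζ))))
    · intro ζ hζ
      exact Finset.le_max' G (‖ζ‖) (Finset.mem_insert_of_mem
        (Finset.mem_union_right _
          (Finset.mem_image_of_mem (fun ζ : ℂ => ‖ζ‖) (Multiset.mem_toFinset.2 hζ))))
  -- choice of ε
  have hρinv : 1 < ρ⁻¹ := (one_lt_inv₀ hρpos).2 hρlt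
  set ε := Real.log ((1 + ρ⁻¹) / 2) with hεdef
  have hεpos : 0 < ε := Real.log_pos (by linarith)
  have hexpε : Real.exp ε = (1 + ρ⁻¹) / 2 := Real.exp_log (by linarith)
  have hρε : ρ * Real.exp ε < 1 := by
    rw [hexpε]
    have he : ρ * ((1 + ρ⁻¹) / 2) = (ρ + 1) / 2 := by
      field_simp
    rw [he]; linarith
  -- basic facts about x t
  set x : ℝ → ℂ := fun t => ((Real.exp t : ℝ) : ℂ) with hxdef
  have hxne : ∀ t, x t ≠ 0 := fun t =>
    Complex.ofReal_ne_zero.2 (Real.exp_ne_zero t)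
  have hbig_norm : ∀ t ∈ Metric.ball (0 : ℝ) ε, ∀ ζ ∈ big, ‖x t / ζ‖ < 1 := by
    intro t ht ζ hζ
    have ht' : |t| < ε := by simpa [Real.dist_eq] using ht
    have h1 : ‖x t / ζ‖ = Real.exp t * (‖ζ‖)⁻¹ := by
      rw [norm_div, Complex.norm_real, Real.norm_eq_abs, abs_of_pos (Real.exp_pos t)]
      rfl
    rw [h1]
    have h2 : Real.exp t * (‖ζ‖)⁻¹ ≤ Real.exp ε * ρ := by
      apply mul_le_mul (Real.exp_le_exp.2 (le_of_lt (lt_of_abs_lt ht'))) (hρbig ζ hζ)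
        (by positivity) (Real.exp_pos _).le
    calc Real.exp t * (‖ζ‖)⁻¹ ≤ Real.exp ε * ρ := h2
      _ = ρ * Real.exp ε := mul_comm _ _
      _ < 1 := hρε
  have hsmall_norm : ∀ t ∈ Metric.ball (0 : ℝ) ε, ∀ ζ ∈ small, ‖(ζ : ℂ) / x t‖ < 1 := by
    intro t ht ζ hζ
    have ht' : |t| < ε := by simpa [Real.dist_eq] using ht
    have h1 : ‖(ζ : ℂ) / x t‖ = ‖ζ‖ * Real.exp (-t) := by
      rw [norm_div, Complex.norm_real, Real.norm_eq_abs, abs_of_pos (Real.exp_pos t),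
        Real.exp_neg, div_eq_mul_inv]
    rw [h1]
    have h2 : ‖ζ‖ * Real.exp (-t) ≤ ρ * Real.exp ε := by
      apply mul_le_mul (hρsmall ζ hζ)
        (Real.exp_le_exp.2 (le_of_lt (lt_of_abs_lt (by rwa [abs_neg]))))
        (Real.exp_pos _).le hρpos.le
    exact lt_of_le_of_lt h2 hρε
  have hbig0 : ∀ ζ ∈ big, ζ ≠ 0 := by
    intro ζ hζ h0
    have h1 : 1 < ‖ζ‖ := (Multiset.mem_filter.1 hζ).2
    rw [h0, norm_zero] at h1
    exact absurd h1 (by norm_num)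
  -- Claim A : explicit series for the derivative of K on the ball
  have claimA : ∀ t ∈ Metric.ball (0 : ℝ) ε, ((deriv K t : ℝ) : ℂ)
      = (Rnum P : ℂ)
        + ∑' j : ℕ, Sk P (j + 1) * ((x t) ^ (j + 1))⁻¹
        - ∑' j : ℕ, Tk P (j + 1) * (x t) ^ (j + 1) := by
    intro t ht
    have hfC : ((f t : ℝ) : ℂ) = P.eval (x t) := by
      rw [hpgf, CumulantAux.eval_sum_poly q n (x t)]
      simp only [hfdef]
      have he : (∑ k ∈ Finset.range (n + 1), q k * Real.exp (t * k))
          = ∑ k ∈ Finset.range (n + 1), q k * Real.exp t ^ k :=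
        Finset.sum_congr rfl fun k _ => by rw [mul_comm t (k : ℝ), Real.exp_nat_mul]
      rw [he]
      push_cast
      simp only [hxdef]
      refine Finset.sum_congr rfl fun k _ => ?_
      norm_cast
    have hf'C : ((f' t : ℝ) : ℂ) = x t * (derivative P).eval (x t) := by
      rw [hpgf, CumulantAux.deriv_eval_sum_poly q n (x t)]
      simp only [hf'def]
      have he : (∑ k ∈ Finset.range (n + 1), q k * (k * Real.exp (t * k)))
          = ∑ k ∈ Finset.range (n + 1), q k * (k * Real.exp t ^ k) :=
        Finset.sum_congr rfl fun k _ => by rw [mul_comm t (k:ℝ), Real.exp_nat_mul]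
      rw [he]
      push_cast
      simp only [hxdef]
      refine Finset.sum_congr rfl fun k _ => ?_
      push_cast
      ring
    have hPx : P.eval (x t) ≠ 0 := by
      rw [← hfC]
      exact_mod_cast (hfpos t).ne'
    have hne : ∀ ζ ∈ P.roots, x t ≠ ζ := by
      intro ζ hζ heq
      rw [← hsplit, Multiset.mem_add] at hζ
      rcases hζ with hζ | hζ
      · have h1 := hsmall_norm t ht ζ hζ
        rw [← heq, div_self (hxne t)] at h1
        simp at h1
      · have h1 := hbig_norm t ht ζ hζ
        rw [heq, div_self (hbig0 ζ hζ)] at h1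
        simp at h1
    have hsp : P = C P.leadingCoeff * (P.roots.map fun a => Polynomial.X - C a).prod :=
      (IsAlgClosed.splits P).eq_prod_roots
    have hQd := CumulantAux.prod_X_sub_C_deriv P.roots (x t) hne
    have heval : P.eval (x t)
        = P.leadingCoeff * eval (x t) ((P.roots.map fun a => Polynomial.X - C a).prod) := by
      conv_lhs => rw [hsp]
      rw [eval_mul, eval_C]
    have hPd : (derivative P).eval (x t)
        = P.eval (x t) * (P.roots.map fun ζ => (x t - ζ)⁻¹).sum := by
      conv_lhs => rw [hsp]
      rw [derivative_C_mul, eval_mul, eval_C, hQd, heval]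
      ring
    have hstep1 : ((deriv K t : ℝ) : ℂ) = (P.roots.map fun ζ => x t * (x t - ζ)⁻¹).sum := by
      rw [hKderiv t, Complex.ofReal_div, hfC, hf'C, hPd, Multiset.sum_map_mul_left]
      rw [mul_comm (eval (x t) P) ((P.roots.map fun ζ => (x t - ζ)⁻¹).sum), ← mul_assoc,
        mul_div_assoc, div_self hPx, mul_one]
    have hsmall_sum : (small.map fun ζ => x t * (x t - ζ)⁻¹).sum
        = (Multiset.card small : ℂ) + ∑' j : ℕ, Sk P (j + 1) * ((x t) ^ (j + 1))⁻¹ := by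
      have h1 : (small.map fun ζ => x t * (x t - ζ)⁻¹).sum
          = (small.map fun ζ => 1 + ∑' j : ℕ, ζ ^ (j + 1) * ((x t) ^ (j + 1))⁻¹).sum := by
        congr 1
        apply Multiset.map_congr rfl
        intro ζ hζ
        rw [← div_eq_mul_inv]
        exact CumulantAux.small_root_expand (x t) ζ (hxne t) (hsmall_norm t ht ζ hζ)
      rw [h1, Multiset.sum_map_add]
      congr 1
      · simp
      · rw [CumulantAux.multiset_tsum_sum small _
          (fun ζ hζ => CumulantAux.summable_small (x t) ζ (hsmall_norm t ht ζ hζ))]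
        refine tsum_congr fun j => ?_
        rw [hSk, ← Multiset.sum_map_mul_right]
    have hbig_sum : (big.map fun ζ => x t * (x t - ζ)⁻¹).sum
        = - ∑' j : ℕ, Tk P (j + 1) * (x t) ^ (j + 1) := by
      have h1 : (big.map fun ζ => x t * (x t - ζ)⁻¹).sum
          = (big.map fun ζ => (-1 : ℂ) * ∑' j : ℕ, (ζ ^ (j + 1))⁻¹ * (x t) ^ (j + 1)).sum := by
        congr 1
        apply Multiset.map_congr rfl
        intro ζ hζ
        rw [← div_eq_mul_inv, neg_one_mul]
        exact CumulantAux.big_root_expand (x t) ζ (hbig0 ζ hζ) (hbig_norm t ht ζ hζ)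
      rw [h1, Multiset.sum_map_mul_left, CumulantAux.multiset_tsum_sum big _
          (fun ζ hζ => CumulantAux.summable_big (x t) ζ (hbig_norm t ht ζ hζ)), neg_one_mul]
      congr 1
      refine tsum_congr fun j => ?_
      rw [hTk, ← Multiset.sum_map_mul_right]
    rw [hstep1, ← hsplit, Multiset.map_add, Multiset.sum_add, hsmall_sum, hbig_sum, hRnum]
    ring
  -- the auxiliary analytic family
  set Gf : ℕ → ℝ → ℂ := fun p t =>
    (if p = 0 then (Rnum P : ℂ) else 0)
      + ∑' j : ℕ, Sk P (j + 1) * (((-1 : ℝ) : ℂ) * ((j : ℂ) + 1)) ^ p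
          * Complex.exp (((-1 : ℝ) : ℂ) * ((j : ℂ) + 1) * t)
      - ∑' j : ℕ, Tk P (j + 1) * (((1 : ℝ) : ℂ) * ((j : ℂ) + 1)) ^ p
          * Complex.exp (((1 : ℝ) : ℂ) * ((j : ℂ) + 1) * t)
    with hGfdef
  have hSbound : ∀ j : ℕ, ‖Sk P (j + 1)‖ ≤ (Multiset.card small : ℝ) * ρ ^ (j + 1) := by
    intro j
    rw [hSk]
    apply CumulantAux.multiset_sum_norm_le _ _ _ (by positivity)
    intro ζ hζ
    rw [norm_pow]
    exact pow_le_pow_left₀ (norm_nonneg ζ) (hρsmall ζ hζ) _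
  have hTbound : ∀ j : ℕ, ‖Tk P (j + 1)‖ ≤ (Multiset.card big : ℝ) * ρ ^ (j + 1) := by
    intro j
    rw [hTk]
    apply CumulantAux.multiset_sum_norm_le _ _ _ (by positivity)
    intro ζ hζ
    rw [norm_inv, norm_pow, ← inv_pow]
    exact pow_le_pow_left₀ (by positivity) (hρbig ζ hζ) _
  have hGderiv : ∀ p, ∀ t ∈ Metric.ball (0 : ℝ) ε, HasDerivAt (Gf p) (Gf (p + 1) t) t := by
    intro p t ht
    have hS := CumulantAux.hasDerivAt_series (fun j => Sk P (j + 1)) (-1)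
      (Multiset.card small) ρ ε (by rw [abs_neg, abs_one]) hρpos.le hεpos (by positivity)
      hSbound hρε p t ht
    have hT := CumulantAux.hasDerivAt_series (fun j => Tk P (j + 1)) 1
      (Multiset.card big) ρ ε abs_one hρpos.le hεpos (by positivity)
      hTbound hρε p t ht
    have h := (hS.const_add (if p = 0 then (Rnum P : ℂ) else 0)).sub hT
    simp only [hGfdef]
    refine h.congr_deriv ?_
    simp
  have hiter := CumulantAux.iteratedDeriv_eq_of_hasDerivAt Gf _ Metric.isOpen_ball hGderiv
  have hG0 : ∀ t ∈ Metric.ball (0 : ℝ) ε, Gf 0 t = ((deriv K t : ℝ) : ℂ) := by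
    intro t ht
    rw [claimA t ht]
    simp only [hGfdef, if_true]
    have eS : ∀ j : ℕ, Sk P (j + 1) * (((-1 : ℝ) : ℂ) * ((j : ℂ) + 1)) ^ 0
        * Complex.exp (((-1 : ℝ) : ℂ) * ((j : ℂ) + 1) * t)
        = Sk P (j + 1) * ((x t) ^ (j + 1))⁻¹ := by
      intro j
      rw [pow_zero, mul_one]
      congr 1
      rw [show (((-1 : ℝ) : ℂ) * ((j : ℂ) + 1) * (t : ℂ)) = -(((j + 1 : ℕ) : ℂ) * (t : ℂ)) by
        push_cast; ring]
      rw [Complex.exp_neg, Complex.exp_nat_mul, ← Complex.ofReal_exp]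
    have eT : ∀ j : ℕ, Tk P (j + 1) * (((1 : ℝ) : ℂ) * ((j : ℂ) + 1)) ^ 0
        * Complex.exp (((1 : ℝ) : ℂ) * ((j : ℂ) + 1) * t)
        = Tk P (j + 1) * (x t) ^ (j + 1) := by
      intro j
      rw [pow_zero, mul_one]
      congr 1
      rw [show (((1 : ℝ) : ℂ) * ((j : ℂ) + 1) * (t : ℂ)) = (((j + 1 : ℕ) : ℂ) * (t : ℂ)) by
        push_cast; ring]
      rw [Complex.exp_nat_mul, ← Complex.ofReal_exp]
    rw [tsum_congr eS, tsum_congr eT]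
  -- smoothness bookkeeping
  have hKuniv : AnalyticOnNhd ℝ K Set.univ := fun z _ => hKan z
  have hdK : ∀ qn : ℕ, AnalyticOnNhd ℝ (deriv^[qn] (deriv K)) Set.univ := by
    intro qn
    induction qn with
    | zero => simpa using hKuniv.deriv
    | succ qn ih =>
        rw [Function.iterate_succ']
        exact ih.deriv
  have hdiff : ∀ qn, Differentiable ℝ (iteratedDeriv qn (deriv K)) := by
    intro qn
    rw [iteratedDeriv_eq_iterate]
    exact fun z => ((hdK qn) z (Set.mem_univ z)).differentiableAt
  have hofReal := CumulantAux.iteratedDeriv_ofReal (deriv K) hdiff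
  have hEq : (fun t => ((deriv K t : ℝ) : ℂ)) =ᶠ[nhds (0 : ℝ)] Gf 0 := by
    filter_upwards [Metric.isOpen_ball.mem_nhds (Metric.mem_ball_self hεpos)] with t ht
    exact (hG0 t ht).symm
  have hmain : ∀ p : ℕ, ((iteratedDeriv (p + 1) K 0 : ℝ) : ℂ) = Gf p 0 := by
    intro p
    rw [iteratedDeriv_succ', ← hofReal p 0, hEq.iteratedDeriv_eq p,
      hiter p 0 (Metric.mem_ball_self hεpos)]
  have hGat0 : ∀ p : ℕ, Gf p 0
      = (if p = 0 then (Rnum P : ℂ) else 0)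
        + (-1 : ℂ) ^ p * ∑' j : ℕ, Sk P (j + 1) * ((j : ℂ) + 1) ^ p
        - ∑' j : ℕ, Tk P (j + 1) * ((j : ℂ) + 1) ^ p := by
    intro p
    simp only [hGfdef]
    have eS : ∀ j : ℕ, Sk P (j + 1) * (((-1 : ℝ) : ℂ) * ((j : ℂ) + 1)) ^ p
        * Complex.exp (((-1 : ℝ) : ℂ) * ((j : ℂ) + 1) * ((0 : ℝ) : ℂ))
        = (-1 : ℂ) ^ p * (Sk P (j + 1) * ((j : ℂ) + 1) ^ p) := by
      intro j
      rw [show (((-1 : ℝ) : ℂ) * ((j : ℂ) + 1) * ((0 : ℝ) : ℂ)) = 0 by push_cast; ring]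
      rw [Complex.exp_zero, mul_one, mul_pow]
      push_cast
      ring
    have eT : ∀ j : ℕ, Tk P (j + 1) * (((1 : ℝ) : ℂ) * ((j : ℂ) + 1)) ^ p
        * Complex.exp (((1 : ℝ) : ℂ) * ((j : ℂ) + 1) * ((0 : ℝ) : ℂ))
        = Tk P (j + 1) * ((j : ℂ) + 1) ^ p := by
      intro j
      rw [show (((1 : ℝ) : ℂ) * ((j : ℂ) + 1) * ((0 : ℝ) : ℂ)) = 0 by push_cast; ring]
      rw [Complex.exp_zero, mul_one]
      push_cast
      ring
    rw [tsum_congr eS, tsum_congr eT, tsum_mul_left]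
  -- conclusion
  refine ⟨ε, hεpos, fun z _ => hKan z, ?_, ?_⟩
  · intro m hm
    obtain ⟨p, rfl⟩ : ∃ p, m = p + 1 := ⟨m - 1, by omega⟩
    rw [hmain p, hGat0 p, if_neg (by omega : ¬ p = 0), zero_add, Am, Bm]
    simp only [Nat.add_sub_cancel]
    rw [pow_succ]
    ring
  · rw [hmain 0, hGat0 0, if_pos rfl, Am, Bm]
    norm_num
    ring
end

section
/- There exists a constant c > 0 such that for every m ≥ 1, every complex root ζ of the partial sum of the exponential series P_m(z) = Σ_{k=0}^m z^k/k! satisfies c·m ≤ |ζ| ≤ m. -/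
/-!
Upper bound: the identity `∑_{k ≤ m} (m - k) z^k / k! = (m - z) P_m(z) + z^{m+1} / m!` turns
`P_m(ζ) = 0` into `|ζ|^{m+1} / m! ≤ ∑ (m - k) |ζ|^k / k!`, whereas at a real `r > m` the same
identity (with `P_m(r) > 0`) makes the right side smaller than `r^{m+1} / m!`.

Lower bound: at a root, `exp ζ` is the tail of its series, so
`e^{-|ζ|} ≤ |exp ζ| ≤ 2 |ζ|^{m+1} / (m+1)! ≤ 2 (e |ζ| / (m+1))^{m+1}`,
which is impossible once `|ζ| < (m+1)/20` because then `e² |ζ| / (m+1) < 1/2`.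
-/

open Finset Nat

section Field

variable {K : Type*} [Field K]

def expPartialSum (m : ℕ) (x : K) : K :=
  ∑ k ∈ range (m + 1), x ^ k / k !

theorem expPartialSum_succ (m : ℕ) (x : K) :
    expPartialSum (m + 1) x = expPartialSum m x + x ^ (m + 1) / (m + 1)! :=
  sum_range_succ _ _

theorem sum_range_sub_mul_pow_div_factorial [CharZero K] (m : ℕ) (x : K) :
    ∑ k ∈ range (m + 1), ((m : K) - k) * x ^ k / k ! =
      (m - x) * expPartialSum m x + x ^ (m + 1) / m ! := by
  induction m with
  | zero => simp [expPartialSum]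
  | succ m ih =>
    have hk : ∀ k ∈ range (m + 1), ((↑(m + 1) : K) - k) * x ^ k / k ! =
        ((m : K) - k) * x ^ k / k ! + x ^ k / k ! := by
      intro k _; push_cast; ring
    rw [sum_range_succ, sum_congr rfl hk, sum_add_distrib, ih, ← expPartialSum,
      expPartialSum_succ, factorial_succ]
    push_cast
    field_simp
    ring

end Field

theorem expPartialSum_pos {x : ℝ} (hx : 0 ≤ x) (m : ℕ) : 0 < expPartialSum m x := by
  rw [expPartialSum, sum_range_succ']
  simp only [pow_zero, factorial_zero, cast_one, div_one]
  exact add_pos_of_nonneg_of_pos (sum_nonneg fun k _ => by positivity) one_pos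

theorem norm_le_of_expPartialSum_eq_zero {m : ℕ} {z : ℂ} (hz : expPartialSum m z = 0) :
    ‖z‖ ≤ m := by
  by_contra! hmr
  have hid := sum_range_sub_mul_pow_div_factorial m z
  rw [hz, mul_zero, zero_add] at hid
  have hnorm : ‖z‖ ^ (m + 1) / m ! ≤ ∑ k ∈ range (m + 1), ((m : ℝ) - k) * ‖z‖ ^ k / k ! := by
    calc ‖z‖ ^ (m + 1) / (m ! : ℝ) = ‖z ^ (m + 1) / (m ! : ℂ)‖ := by simp
      _ ≤ ∑ k ∈ range (m + 1), ‖((m : ℂ) - k) * z ^ k / (k ! : ℂ)‖ := hid ▸ norm_sum_le _ _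
      _ = _ := sum_congr rfl fun k hk => by
        have hkm : (k : ℝ) ≤ m := by exact_mod_cast mem_range_succ_iff.1 hk
        rw [show (m : ℂ) - k = ((m - k : ℝ) : ℂ) by push_cast; rfl, norm_div, norm_mul,
          Complex.norm_real, Real.norm_of_nonneg (sub_nonneg.2 hkm), norm_pow, norm_natCast]
  have hneg := mul_neg_of_neg_of_pos (sub_neg.2 hmr) (expPartialSum_pos (norm_nonneg z) m)
  linarith [sum_range_sub_mul_pow_div_factorial m ‖z‖]

theorem pow_div_factorial_le_exp_one_mul_div_pow {x : ℝ} (hx : 0 ≤ x) (n : ℕ) :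
    x ^ n / n ! ≤ (Real.exp 1 * x / n) ^ n := by
  rcases n.eq_zero_or_pos with rfl | hn
  · simp
  have hn' : (0 : ℝ) < n := cast_pos.2 hn
  calc x ^ n / n ! = (x / n) ^ n * ((n : ℝ) ^ n / n !) := by
        rw [div_pow]; field_simp
    _ ≤ (x / n) ^ n * Real.exp 1 ^ n := by
        gcongr
        rw [← Real.exp_nat_mul, mul_one]
        exact Real.pow_div_factorial_le_exp (x := n) hn'.le n
    _ = (Real.exp 1 * x / n) ^ n := by rw [← mul_pow]; ring

theorem exp_neg_norm_le_of_expPartialSum_eq_zero {m : ℕ} {z : ℂ} (hz : expPartialSum m z = 0)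
    (hzm : ‖z‖ ≤ (m + 2) / 2) :
    Real.exp (-‖z‖) ≤ ‖z‖ ^ (m + 1) / (m + 1)! * 2 := by
  calc Real.exp (-‖z‖) ≤ ‖Complex.exp z‖ := by
        rw [Complex.norm_exp]
        exact Real.exp_le_exp.2 (neg_le_of_abs_le (Complex.abs_re_le_norm z))
    _ = ‖Complex.exp z - expPartialSum m z‖ := by rw [hz, sub_zero]
    _ ≤ _ := Complex.exp_bound' (by
        rw [div_le_iff₀ (by positivity)]; push_cast; linarith)

theorem le_norm_of_expPartialSum_eq_zero {m : ℕ} {z : ℂ} (hz : expPartialSum m z = 0) :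
    (m + 1 : ℝ) / 20 ≤ ‖z‖ := by
  by_contra! hzm
  have he : Real.exp 1 ^ 2 < 10 := by nlinarith [Real.exp_one_lt_d9, Real.exp_pos 1]
  set q := Real.exp 1 ^ 2 * ‖z‖ / (m + 1 : ℕ) with hq_def
  have hq : q < 1 / 2 := by
    rw [hq_def, div_lt_iff₀ (by positivity)]; push_cast
    nlinarith [mul_le_mul_of_nonneg_right he.le (norm_nonneg z)]
  have hq1 : 1 ≤ 2 * q ^ (m + 1) := by
    calc (1 : ℝ) = Real.exp (-‖z‖) * Real.exp ‖z‖ := by rw [← Real.exp_add]; simp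
      _ ≤ ‖z‖ ^ (m + 1) / (m + 1)! * 2 * Real.exp 1 ^ (m + 1) := by
        gcongr
        · exact exp_neg_norm_le_of_expPartialSum_eq_zero hz (by linarith [m.cast_nonneg (α := ℝ)])
        · rw [← Real.exp_nat_mul, mul_one]; exact Real.exp_le_exp.2 (by push_cast; linarith)
      _ ≤ (Real.exp 1 * ‖z‖ / (m + 1 : ℕ)) ^ (m + 1) * 2 * Real.exp 1 ^ (m + 1) := by
        gcongr; exact pow_div_factorial_le_exp_one_mul_div_pow (norm_nonneg z) (m + 1)
      _ = 2 * q ^ (m + 1) := by rw [hq_def]; ring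
  have hq_pow : q ^ (m + 1) ≤ q := pow_le_of_le_one (by positivity) (by linarith) (succ_ne_zero m)
  linarith

open Polynomial

/-- **Lemma 12 (Szegő).**  There is a constant `c > 0` such that for every `m ≥ 1`, every
complex root `ζ` of the partial sum `P_m(z) = ∑_{k=0}^m z^k / k!` of the exponential
series satisfies `c m ≤ |ζ| ≤ m`. -/
theorem szego_roots_of_exp_partial_sums :
    ∃ c : ℝ, 0 < c ∧ ∀ m : ℕ, 1 ≤ m →
      ∀ ζ ∈ (∑ k ∈ Finset.range (m + 1),
          Polynomial.C (((k.factorial : ℂ))⁻¹) * Polynomial.X ^ k).roots,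
        c * m ≤ ‖ζ‖ ∧ ‖ζ‖ ≤ m := by
  refine ⟨1 / 20, by norm_num, fun m _ ζ hζ => ?_⟩
  have hroot : expPartialSum m ζ = 0 := by
    simpa [expPartialSum, eval_finsetSum, div_eq_inv_mul] using (mem_roots'.1 hζ).2
  have hlower := le_norm_of_expPartialSum_eq_zero hroot
  exact ⟨by linarith, norm_le_of_expPartialSum_eq_zero hroot⟩
end

section
/- For every function ε : ℕ → (0, ∞) with ε(n) → 0 as n → ∞, there exists a sequence of random variables {X_n} such that: X_n takes values in {0,1,…,n}; the standard deviation σ_n of X_n tends to infinity; every root ζ of the probability generating function P_n of X_n satisfies |ζ| > n^{ε(n)}; and {X_n} does not satisfy a central limit theorem, i.e. (X_n − μ_n)/σ_n does not converge in distribution to a standard normal random variable. -/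
open MeasureTheory ProbabilityTheory Polynomial Filter Topology
open Finset
open scoped Classical

/-- A sequence of random variables `X n` (on probability spaces `(Ω n, μ n)`) with means `m n`
and standard deviations `s n` satisfies a central limit theorem if `(X n - m n) / s n`
converges in distribution to a standard normal random variable. -/
def SatisfiesCLT (Ω : ℕ → Type) [∀ n, MeasurableSpace (Ω n)]
    (μ : ∀ n, Measure (Ω n)) (X : ∀ n, Ω n → ℝ) (m s : ℕ → ℝ) : Prop :=
  ∀ f : BoundedContinuousFunction ℝ ℝ,
    Tendsto (fun n => ∫ ω, f ((X n ω - m n) / s n) ∂ μ n) atTop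
      (𝓝 (∫ x, f x ∂ (gaussianReal 0 1)))

namespace NoCLTaux

lemma poly_eq (x y : ℝ) (m : ℕ) :
    (C x * X + C y) ^ m
      = ∑ j ∈ range (m + 1), C ((m.choose j : ℝ) * x ^ j * y ^ (m - j)) * X ^ j := by
  rw [add_pow]
  refine Finset.sum_congr rfl fun j hj => ?_
  simp only [mul_pow, ← C_eq_natCast, ← C_pow, C_mul]
  ring

lemma sum_w (x y : ℝ) (hxy : x + y = 1) (m : ℕ) :
    ∑ j ∈ range (m + 1), ((m.choose j : ℝ) * x ^ j * y ^ (m - j)) = 1 := by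
  have h := congrArg (Polynomial.eval 1) (poly_eq x y m)
  simpa [eval_finset_sum, hxy] using h.symm

lemma sum_jw (x y : ℝ) (hxy : x + y = 1) (m : ℕ) :
    ∑ j ∈ range (m + 1), (j : ℝ) * ((m.choose j : ℝ) * x ^ j * y ^ (m - j)) = m * x := by
  have h := congrArg (fun p => Polynomial.eval 1 (Polynomial.derivative p)) (poly_eq x y m)
  simp only [derivative_pow, derivative_add, derivative_mul, derivative_C, derivative_X,
    derivative_sum, derivative_X_pow, zero_mul, mul_one, add_zero, zero_add, mul_zero,
    eval_finset_sum, eval_mul, eval_add, eval_pow, eval_C, eval_X, eval_natCast, one_pow,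
    ] at h
  rw [hxy, one_pow] at h
  have e : ∑ j ∈ range (m + 1), (j : ℝ) * ((m.choose j : ℝ) * x ^ j * y ^ (m - j))
      = ∑ j ∈ range (m + 1), (m.choose j : ℝ) * x ^ j * y ^ (m - j) * (j : ℝ) :=
    Finset.sum_congr rfl fun j hj => by ring
  rw [e, ← h]; ring

lemma sum_jjw (x y : ℝ) (hxy : x + y = 1) (m : ℕ) :
    ∑ j ∈ range (m + 1),
        ((j : ℝ) * ((j - 1 : ℕ) : ℝ)) * ((m.choose j : ℝ) * x ^ j * y ^ (m - j))
      = (m : ℝ) * ((m - 1 : ℕ) : ℝ) * x ^ 2 := by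
  have h := congrArg (fun p => Polynomial.eval 1 (Polynomial.derivative (Polynomial.derivative p)))
    (poly_eq x y m)
  simp only [derivative_pow, derivative_add, derivative_mul, derivative_C, derivative_X,
    derivative_sum, derivative_X_pow, derivative_natCast, zero_mul, mul_one, add_zero, zero_add,
    mul_zero, eval_finset_sum, eval_mul, eval_add, eval_pow, eval_C, eval_X, eval_natCast,
    one_pow] at h
  rw [hxy, one_pow] at h
  have e : ∑ j ∈ range (m + 1),
        ((j : ℝ) * ((j - 1 : ℕ) : ℝ)) * ((m.choose j : ℝ) * x ^ j * y ^ (m - j))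
      = ∑ j ∈ range (m + 1), (m.choose j : ℝ) * x ^ j * y ^ (m - j) * ((j:ℝ) * ((j - 1 : ℕ) : ℝ)) :=
    Finset.sum_congr rfl fun j hj => by ring
  rw [e, ← h]; ring

noncomputable def w (m j : ℕ) : ℝ :=
  (m.choose j : ℝ) * ((m : ℝ)⁻¹) ^ j * (1 - (m : ℝ)⁻¹) ^ (m - j)

noncomputable def μg (m : ℕ) : Measure ℝ :=
  ∑ j ∈ range (m + 1), ENNReal.ofReal (w m j) • Measure.dirac (j : ℝ)

lemma w_nonneg {m : ℕ} (hm : 1 ≤ m) (j : ℕ) : 0 ≤ w m j := by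
  have h1 : (1 : ℝ) ≤ (m : ℝ) := by exact_mod_cast hm
  have : (0:ℝ) ≤ 1 - (m : ℝ)⁻¹ := by
    have h2 : (m : ℝ)⁻¹ ≤ 1 := inv_le_one_of_one_le₀ h1
    linarith
  exact mul_nonneg (mul_nonneg (by positivity) (by positivity)) (pow_nonneg this _)

lemma sum_w_eq_one {m : ℕ} (hm : 1 ≤ m) : ∑ j ∈ range (m + 1), w m j = 1 := by
  have := sum_w ((m : ℝ)⁻¹) (1 - (m : ℝ)⁻¹) (by ring) m
  simpa [w] using this

lemma μg_isProb {m : ℕ} (hm : 1 ≤ m) : IsProbabilityMeasure (μg m) := by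
  constructor
  rw [μg, Measure.coe_finset_sum, Finset.sum_apply]
  have : ∀ j ∈ range (m + 1),
      (ENNReal.ofReal (w m j) • Measure.dirac (j : ℝ)) Set.univ = ENNReal.ofReal (w m j) := by
    intro j _
    simp [Measure.smul_apply]
  rw [Finset.sum_congr rfl this, ← ENNReal.ofReal_sum_of_nonneg fun j _ => w_nonneg hm j,
    sum_w_eq_one hm, ENNReal.ofReal_one]

lemma μg_apply_toReal {m : ℕ} (hm : 1 ≤ m) (S : Set ℝ) :
    ((μg m) S).toReal = ∑ j ∈ range (m + 1), if (j : ℝ) ∈ S then w m j else 0 := by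
  classical
  rw [μg, Measure.coe_finset_sum, Finset.sum_apply]
  have : ∀ j ∈ range (m + 1),
      (ENNReal.ofReal (w m j) • Measure.dirac (j : ℝ)) S
        = ENNReal.ofReal (if (j : ℝ) ∈ S then w m j else 0) := by
    intro j _
    rw [Measure.smul_apply, Measure.dirac_apply, smul_eq_mul]
    by_cases h : (j : ℝ) ∈ S <;> simp [h, Set.indicator]
  have hnn : ∀ j ∈ range (m + 1), 0 ≤ if (j : ℝ) ∈ S then w m j else 0 := by
    intro j _
    split <;> simp [w_nonneg hm j]
  rw [Finset.sum_congr rfl this, ← ENNReal.ofReal_sum_of_nonneg hnn,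
    ENNReal.toReal_ofReal (Finset.sum_nonneg hnn)]

lemma integrable_wdirac {g : ℝ → ℝ} (hg : Measurable g) (c : ℝ) (a : ℝ) :
    Integrable g (ENNReal.ofReal c • Measure.dirac a) := by
  refine ⟨hg.aestronglyMeasurable, ?_⟩
  rw [HasFiniteIntegral, lintegral_smul_measure, lintegral_dirac' _ hg.enorm]
  exact ENNReal.mul_lt_top ENNReal.ofReal_lt_top enorm_lt_top

lemma integral_μg {m : ℕ} (hm : 1 ≤ m) {g : ℝ → ℝ} (hg : Measurable g) :
    ∫ ω, g ω ∂ (μg m) = ∑ j ∈ range (m + 1), w m j * g j := by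
  rw [μg, integral_finset_sum_measure fun j _ => integrable_wdirac hg _ _]
  refine Finset.sum_congr rfl fun j hj => ?_
  rw [integral_smul_measure, integral_dirac, ENNReal.toReal_ofReal (w_nonneg hm j), smul_eq_mul]

noncomputable def Xg (k m : ℕ) : ℝ → ℝ := fun ω => ((k * min m ⌊ω⌋₊ : ℕ) : ℝ)

lemma Xg_meas (k m : ℕ) : Measurable (Xg k m) :=
  (measurable_from_top (f := fun j : ℕ => ((k * min m j : ℕ) : ℝ))).comp Nat.measurable_floor

lemma Xg_bdd (k m : ℕ) (ω : ℝ) : |Xg k m ω| ≤ (k * m : ℕ) := by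
  rw [Xg, abs_of_nonneg (by positivity)]
  exact_mod_cast Nat.mul_le_mul_left k (min_le_left _ _)

lemma Xg_atom {k m j : ℕ} (hj : j ≤ m) : Xg k m (j : ℝ) = ((k * j : ℕ) : ℝ) := by
  rw [Xg, Nat.floor_natCast, min_eq_right hj]

lemma mean_eq {k m : ℕ} (hm : 1 ≤ m) : ∫ ω, Xg k m ω ∂ (μg m) = (k : ℝ) := by
  rw [integral_μg hm (Xg_meas k m)]
  have hx : (m : ℝ) * (m : ℝ)⁻¹ = 1 := by
    rw [mul_inv_cancel₀ (Nat.cast_ne_zero.mpr (by omega))]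
  have hs := sum_jw ((m : ℝ)⁻¹) (1 - (m : ℝ)⁻¹) (by ring) m
  rw [hx] at hs
  calc ∑ j ∈ range (m + 1), w m j * Xg k m j
      = (k : ℝ) * ∑ j ∈ range (m + 1), (j : ℝ) * ((m.choose j : ℝ) * ((m:ℝ)⁻¹) ^ j * (1 - (m:ℝ)⁻¹) ^ (m - j)) := by
        rw [Finset.mul_sum]
        refine Finset.sum_congr rfl fun j hj => ?_
        rw [Xg_atom (Nat.lt_succ_iff.mp (Finset.mem_range.mp hj)), w]
        push_cast
        ring
    _ = k := by rw [hs, mul_one]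

lemma var_eq {k m : ℕ} (hm : 1 ≤ m) :
    ∫ ω, (Xg k m ω - (k : ℝ)) ^ 2 ∂ (μg m) = (k : ℝ) ^ 2 * (1 - (m : ℝ)⁻¹) := by
  have hmeas : Measurable (fun ω => (Xg k m ω - (k : ℝ)) ^ 2) :=
    ((Xg_meas k m).sub measurable_const).pow_const 2
  rw [integral_μg hm hmeas]
  have hm0 : (m : ℝ) ≠ 0 := by
    exact Nat.cast_ne_zero.mpr (by omega)
  have hx : (m : ℝ) * (m : ℝ)⁻¹ = 1 := mul_inv_cancel₀ hm0
  set x : ℝ := (m : ℝ)⁻¹ with hxdef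
  have hsw := sum_w_eq_one hm
  have hs1 := sum_jw x (1 - x) (by ring) m
  have hs2 := sum_jjw x (1 - x) (by ring) m
  rw [hx] at hs1
  -- key pointwise identity
  have key : ∀ j : ℕ, ((j : ℝ) - 1) ^ 2
      = (j : ℝ) * ((j - 1 : ℕ) : ℝ) - (j : ℝ) + 1 := by
    intro j
    cases j with
    | zero => simp
    | succ i => push_cast [Nat.succ_sub_one]; ring
  have hB : (m : ℝ) * ((m - 1 : ℕ) : ℝ) * x ^ 2 = 1 - x := by
    cases m with
    | zero => simp at hm
    | succ i =>
      push_cast [Nat.succ_sub_one]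
      have hx' : ((i:ℝ)+1) * x = 1 := by exact_mod_cast hx
      linear_combination ((i:ℝ) * x + 1) * hx'
  calc ∑ j ∈ range (m + 1), w m j * (Xg k m j - (k:ℝ)) ^ 2
      = (k:ℝ)^2 * ∑ j ∈ range (m + 1), (((j : ℝ) * ((j - 1 : ℕ) : ℝ) - (j : ℝ) + 1)
          * ((m.choose j : ℝ) * x ^ j * (1 - x) ^ (m - j))) := by
        rw [Finset.mul_sum]
        refine Finset.sum_congr rfl fun j hj => ?_
        rw [Xg_atom (Nat.lt_succ_iff.mp (Finset.mem_range.mp hj)), w, ← key, ← hxdef]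
        push_cast
        ring
    _ = (k:ℝ)^2 * (1 - x) := by
        congr 1
        have : ∀ j ∈ range (m+1), ((j : ℝ) * ((j - 1 : ℕ) : ℝ) - (j : ℝ) + 1)
            * ((m.choose j : ℝ) * x ^ j * (1 - x) ^ (m - j))
            = ((j : ℝ) * ((j - 1 : ℕ) : ℝ)) * ((m.choose j : ℝ) * x ^ j * (1 - x) ^ (m - j))
              - (j : ℝ) * ((m.choose j : ℝ) * x ^ j * (1 - x) ^ (m - j))
              + ((m.choose j : ℝ) * x ^ j * (1 - x) ^ (m - j)) := fun j _ => by ring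
        rw [Finset.sum_congr rfl this]
        rw [Finset.sum_add_distrib, Finset.sum_sub_distrib, hs2, hs1]
        have hw1 : ∑ j ∈ range (m + 1), (m.choose j : ℝ) * x ^ j * (1 - x) ^ (m - j) = 1 := by
          rw [hxdef]; simpa [w] using hsw
        rw [hw1, hB]
        ring

lemma polyC_eq (x y : ℂ) (p : Polynomial ℂ) (m : ℕ) :
    (C x * p + C y) ^ m
      = ∑ j ∈ range (m + 1), C ((m.choose j : ℂ) * x ^ j * y ^ (m - j)) * p ^ j := by
  rw [add_pow]
  refine Finset.sum_congr rfl fun j hj => ?_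
  simp only [mul_pow, ← C_eq_natCast, ← C_pow, C_mul]
  ring

lemma pgf_eq {k m n : ℕ} (hm : 1 ≤ m) (hkm : k * m ≤ n) :
    pgf (μg m) (Xg k m) n
      = (C ((m : ℂ)⁻¹) * (X : Polynomial ℂ) ^ k + C (1 - (m : ℂ)⁻¹)) ^ m := by
  classical
  have hco : ∀ i : ℕ, ((μg m) {ω | Xg k m ω = (i : ℝ)}).toReal
      = ∑ j ∈ range (m + 1), if k * j = i then w m j else 0 := by
    intro i
    rw [μg_apply_toReal hm]
    refine Finset.sum_congr rfl fun j hj => ?_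
    have hj' : j ≤ m := Nat.lt_succ_iff.mp (mem_range.mp hj)
    have hiff : ((j : ℝ) ∈ {ω : ℝ | Xg k m ω = (i : ℝ)}) ↔ (k * j = i) := by
      simp only [Set.mem_setOf_eq, Xg_atom hj']
      exact_mod_cast Nat.cast_inj (R := ℝ)
    by_cases h : k * j = i <;> simp [h, hiff]
  rw [pgf]
  have step1 : ∀ i ∈ range (n + 1),
      C ((((μg m) {ω | Xg k m ω = (i : ℝ)}).toReal : ℂ)) * (X : Polynomial ℂ) ^ i
        = ∑ j ∈ range (m + 1), (if k * j = i then C ((w m j : ℂ)) * (X : Polynomial ℂ) ^ i else 0) := by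
    intro i _
    rw [hco i]
    push_cast
    rw [map_sum, Finset.sum_mul]
    refine Finset.sum_congr rfl fun j hj => ?_
    by_cases h : k * j = i <;> simp [h]
  rw [Finset.sum_congr rfl step1, Finset.sum_comm]
  have step2 : ∀ j ∈ range (m + 1),
      (∑ i ∈ range (n + 1), if k * j = i then C ((w m j : ℂ)) * (X : Polynomial ℂ) ^ i else 0)
        = C ((w m j : ℂ)) * (X : Polynomial ℂ) ^ (k * j) := by
    intro j hj
    have hj' : j ≤ m := Nat.lt_succ_iff.mp (mem_range.mp hj)
    have hmem : k * j ∈ range (n + 1) := by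
      refine mem_range.mpr (Nat.lt_succ_of_le ?_)
      exact le_trans (Nat.mul_le_mul_left k hj') hkm
    rw [Finset.sum_ite_eq (range (n + 1)) (k * j)
      (fun i => C ((w m j : ℂ)) * (X : Polynomial ℂ) ^ i), if_pos hmem]
  rw [Finset.sum_congr rfl step2, polyC_eq]
  refine Finset.sum_congr rfl fun j hj => ?_
  rw [← pow_mul, w]
  push_cast
  ring_nf

lemma root_abs {k m : ℕ} (hm : 2 ≤ m) {ζ : ℂ}
    (hζ : ζ ∈ ((C ((m : ℂ)⁻¹) * (X : Polynomial ℂ) ^ k + C (1 - (m : ℂ)⁻¹)) ^ m).roots) :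
    ‖ζ‖ ^ k = (m : ℝ) - 1 := by
  rw [mem_roots'] at hζ
  obtain ⟨-, hroot⟩ := hζ
  rw [IsRoot, eval_pow, pow_eq_zero_iff (by omega : m ≠ 0), eval_add, eval_mul, eval_C,
    eval_pow, eval_X] at hroot
  have hm0 : (m : ℂ) ≠ 0 := Nat.cast_ne_zero.mpr (by omega)
  have hz : ζ ^ k = 1 - (m : ℂ) := by
    simp only [eval_C] at hroot
    have hinv : (m : ℂ) * (m : ℂ)⁻¹ = 1 := mul_inv_cancel₀ hm0
    linear_combination (m : ℂ) * hroot + (1 - ζ ^ k) * hinv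
  rw [← norm_pow, hz]
  have : ((1 : ℂ) - (m : ℂ)) = (((1 - (m : ℝ)) : ℝ) : ℂ) := by push_cast; ring
  rw [this, Complex.norm_real, Real.norm_eq_abs, abs_of_nonpos (by simp; exact_mod_cast le_trans (by norm_num) hm)]
  ring

noncomputable def kk (ε : ℕ → ℝ) (n : ℕ) : ℕ := min ⌈Real.sqrt (ε n)⁻¹⌉₊ (Nat.sqrt n)

noncomputable def mm (ε : ℕ → ℝ) (n : ℕ) : ℕ := n / kk ε n

def Good (ε : ℕ → ℝ) (n : ℕ) : Prop :=
  1 ≤ kk ε n ∧ 2 ≤ mm ε n ∧ ((n : ℝ) ^ (ε n)) ^ (kk ε n) < (mm ε n : ℝ) - 1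

variable {ε : ℕ → ℝ}

lemma kk_tendsto (hεpos : ∀ n, 0 < ε n) (hε : Tendsto ε atTop (𝓝 0)) :
    Tendsto (kk ε) atTop atTop := by
  rw [tendsto_atTop]
  intro C
  have h1 : ∀ᶠ n in atTop, ε n < (((C : ℝ) + 1) ^ 2)⁻¹ :=
    hε.eventually_lt_const (by positivity)
  have h2 : ∀ᶠ n : ℕ in atTop, C * C ≤ n := eventually_atTop.mpr ⟨C * C, fun n h => h⟩
  filter_upwards [h1, h2] with n hn1 hn2
  refine le_min ?_ (Nat.le_sqrt.mpr hn2)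
  have hinv : ((C : ℝ) + 1) ^ 2 < (ε n)⁻¹ := by
    have := inv_strictAnti₀ (hεpos n) hn1
    rwa [inv_inv] at this
  have hsq : (C : ℝ) ≤ Real.sqrt (ε n)⁻¹ := by
    rw [Real.le_sqrt (Nat.cast_nonneg C) (inv_nonneg.mpr (hεpos n).le)]
    nlinarith [Nat.cast_nonneg (α := ℝ) C]
  have hfin : (C : ℝ) ≤ (⌈Real.sqrt (ε n)⁻¹⌉₊ : ℝ) := hsq.trans (Nat.le_ceil _)
  exact_mod_cast hfin

lemma sqrt_le_mm (hn : 1 ≤ n) (hε1 : 0 < ε n) : Nat.sqrt n ≤ mm ε n := by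
  have hk1 : 1 ≤ kk ε n := by
    refine le_min ?_ (Nat.sqrt_pos.mpr hn)
    exact Nat.ceil_pos.mpr (Real.sqrt_pos.mpr (by positivity))
  have h1 : Nat.sqrt n ≤ n / Nat.sqrt n :=
    (Nat.le_div_iff_mul_le (Nat.sqrt_pos.mpr hn)).mpr (by simpa [pow_two] using Nat.sqrt_le' n)
  exact h1.trans (Nat.div_le_div_left (min_le_right _ _) hk1)

lemma eventually_good (hεpos : ∀ n, 0 < ε n) (hε : Tendsto ε atTop (𝓝 0)) :
    ∀ᶠ n in atTop, Good ε n := by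
  have hsqrt0 : Tendsto (fun n => Real.sqrt (ε n)) atTop (𝓝 0) := by
    have := (Real.continuous_sqrt.tendsto 0).comp hε
    simpa [Function.comp_def] using this
  have hsmall : ∀ᶠ n in atTop, Real.sqrt (ε n) + ε n ≤ 4⁻¹ := by
    have h1 : ∀ᶠ n in atTop, Real.sqrt (ε n) < 8⁻¹ := hsqrt0.eventually_lt_const (by norm_num)
    have h2 : ∀ᶠ n in atTop, ε n < 8⁻¹ := hε.eventually_lt_const (by norm_num)
    filter_upwards [h1, h2] with n hn1 hn2; linarith
  have hkk := (kk_tendsto hεpos hε).eventually_ge_atTop 1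
  have hn81 : ∀ᶠ n : ℕ in atTop, 81 ≤ n := eventually_atTop.mpr ⟨81, fun n h => h⟩
  filter_upwards [hsmall, hkk, hn81] with n hsm hk1 hn81
  have hn1 : 1 ≤ n := by omega
  have hmm : Nat.sqrt n ≤ mm ε n := sqrt_le_mm hn1 (hεpos n)
  have hsq9 : 9 ≤ Nat.sqrt n := Nat.le_sqrt.mpr (by omega)
  refine ⟨hk1, by omega, ?_⟩
  -- exponent bound : ε n * kk ε n ≤ 4⁻¹
  have hεk : ε n * (kk ε n : ℝ) ≤ 4⁻¹ := by
    have hkle : (kk ε n : ℝ) ≤ Real.sqrt (ε n)⁻¹ + 1 := by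
      have h1 : (kk ε n : ℝ) ≤ (⌈Real.sqrt (ε n)⁻¹⌉₊ : ℝ) := by
        exact_mod_cast min_le_left _ _
      have h2 : (⌈Real.sqrt (ε n)⁻¹⌉₊ : ℝ) < Real.sqrt (ε n)⁻¹ + 1 :=
        Nat.ceil_lt_add_one (Real.sqrt_nonneg _)
      linarith
    have hεnn : 0 ≤ ε n := (hεpos n).le
    have hkey : ε n * Real.sqrt (ε n)⁻¹ = Real.sqrt (ε n) := by
      rw [Real.sqrt_inv, ← div_eq_mul_inv, Real.div_sqrt]
    have : ε n * (kk ε n : ℝ) ≤ ε n * (Real.sqrt (ε n)⁻¹ + 1) :=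
      mul_le_mul_of_nonneg_left hkle hεnn
    rw [mul_add, hkey, mul_one] at this
    linarith
  have hncast : (1 : ℝ) ≤ (n : ℝ) := by exact_mod_cast hn1
  have hrw : ((n : ℝ) ^ (ε n)) ^ (kk ε n) = (n : ℝ) ^ (ε n * (kk ε n : ℝ)) := by
    rw [← Real.rpow_natCast ((n : ℝ) ^ (ε n)) (kk ε n), ← Real.rpow_mul (by positivity)]
  have hle : ((n : ℝ) ^ (ε n)) ^ (kk ε n) ≤ (n : ℝ) ^ ((4 : ℝ)⁻¹) := by
    rw [hrw]
    exact Real.rpow_le_rpow_of_exponent_le hncast hεk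
  -- now show n ^ (1/4) < mm - 1
  set t : ℝ := (n : ℝ) ^ ((4 : ℝ)⁻¹) with ht
  have ht3 : 3 ≤ t := by
    have h81 : ((81 : ℕ) : ℝ) ≤ (n : ℝ) := by exact_mod_cast hn81
    have : ((81 : ℝ)) ^ ((4 : ℝ)⁻¹) ≤ t := by
      rw [ht]
      exact Real.rpow_le_rpow (by norm_num) (by exact_mod_cast h81) (by norm_num)
    have h3 : ((81 : ℝ)) ^ ((4 : ℝ)⁻¹) = 3 := by
      rw [show (81 : ℝ) = 3 ^ (4 : ℕ) by norm_num,
        ← Real.rpow_natCast (3 : ℝ) 4, ← Real.rpow_mul (by norm_num)]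
      norm_num
    linarith
  have htt : t * t = Real.sqrt n := by
    rw [ht, ← Real.rpow_add (by positivity), Real.sqrt_eq_rpow]
    norm_num
  have hsqrtlt : Real.sqrt n < (Nat.sqrt n : ℝ) + 1 := Real.real_sqrt_lt_nat_sqrt_succ
  have hmmR : (Nat.sqrt n : ℝ) ≤ (mm ε n : ℝ) := by exact_mod_cast hmm
  calc ((n : ℝ) ^ (ε n)) ^ (kk ε n) ≤ t := hle
    _ < (mm ε n : ℝ) - 1 := by nlinarith

noncomputable def φ : ℝ → ℝ := fun x => max 0 (min (x - 4⁻¹) (4⁻¹ * 3 - x))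

lemma φ_cont : Continuous φ :=
  continuous_const.max ((continuous_id.sub continuous_const).min
    (continuous_const.sub continuous_id))

lemma φ_nonneg (x : ℝ) : 0 ≤ φ x := le_max_left _ _

lemma φ_bdd (x : ℝ) : |φ x| ≤ 1 := by
  rw [abs_of_nonneg (φ_nonneg x)]
  refine max_le (by norm_num) ?_
  rcases le_total (x - 4⁻¹) (4⁻¹ * 3 - x) with h | h
  · rw [min_eq_left h]; linarith
  · rw [min_eq_right h]; linarith

lemma φ_zero_of_le {x : ℝ} (h : x ≤ 4⁻¹) : φ x = 0 :=
  max_eq_left ((min_le_left _ _).trans (by linarith))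

lemma φ_zero_of_ge {x : ℝ} (h : 4⁻¹ * 3 ≤ x) : φ x = 0 :=
  max_eq_left ((min_le_right _ _).trans (by linarith))

noncomputable def fbump : BoundedContinuousFunction ℝ ℝ :=
  BoundedContinuousFunction.ofNormedAddCommGroup φ φ_cont 1
    (fun x => by rw [Real.norm_eq_abs]; exact φ_bdd x)

@[simp] lemma fbump_apply (x : ℝ) : fbump x = φ x := rfl

lemma gauss_pos : 0 < ∫ x, fbump x ∂ (gaussianReal 0 1) := by
  rw [integral_pos_iff_support_of_nonneg]
  · -- 0 < (gaussianReal 0 1) (support fbump)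
    have hsub : Set.Ioo (4⁻¹ : ℝ) (4⁻¹ * 3) ⊆ Function.support (fun x => fbump x) := by
      intro x hx
      simp only [Function.mem_support, fbump_apply, φ]
      have h1 : 0 < x - 4⁻¹ := by linarith [hx.1]
      have h2 : 0 < 4⁻¹ * 3 - x := by linarith [hx.2]
      have : 0 < min (x - 4⁻¹) (4⁻¹ * 3 - x) := lt_min h1 h2
      positivity
    refine lt_of_lt_of_le ?_ (measure_mono hsub)
    rw [gaussianReal_apply 0 (one_ne_zero) _]
    rw [setLIntegral_pos_iff (measurable_gaussianPDF 0 1)]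
    have hsup : Function.support (gaussianPDF 0 1) = Set.univ := by
      ext x
      simp only [Function.mem_support, Set.mem_univ, iff_true, gaussianPDF]
      exact fun hc => absurd (ENNReal.ofReal_eq_zero.mp hc)
        (not_le.mpr (gaussianPDFReal_pos 0 1 x one_ne_zero))
    rw [hsup, Set.univ_inter, Real.volume_Ioo]
    norm_num
  · exact fun x => φ_nonneg x
  · exact fbump.integrable _

variable (ε : ℕ → ℝ)

noncomputable def μfin (n : ℕ) : Measure ℝ :=
  if Good ε n then μg (mm ε n) else Measure.dirac 0

noncomputable def Xfin (n : ℕ) : ℝ → ℝ :=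
  if Good ε n then Xg (kk ε n) (mm ε n) else fun _ => 0

noncomputable def mfin (n : ℕ) : ℝ := ∫ ω, Xfin ε n ω ∂ (μfin ε n)

noncomputable def sfin (n : ℕ) : ℝ :=
  Real.sqrt (∫ ω, (Xfin ε n ω - mfin ε n) ^ 2 ∂ (μfin ε n))

variable {ε}

lemma μfin_good {n : ℕ} (h : Good ε n) : μfin ε n = μg (mm ε n) := if_pos h
lemma μfin_bad {n : ℕ} (h : ¬ Good ε n) : μfin ε n = Measure.dirac 0 := if_neg h
lemma Xfin_good {n : ℕ} (h : Good ε n) : Xfin ε n = Xg (kk ε n) (mm ε n) := if_pos h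
lemma Xfin_bad {n : ℕ} (h : ¬ Good ε n) : Xfin ε n = fun _ => 0 := if_neg h

lemma mfin_good {n : ℕ} (h : Good ε n) : mfin ε n = kk ε n := by
  rw [mfin, μfin_good h, Xfin_good h, mean_eq (by have := h.2.1; omega)]

lemma mfin_bad {n : ℕ} (h : ¬ Good ε n) : mfin ε n = 0 := by
  rw [mfin, μfin_bad h, Xfin_bad h]
  simp

lemma sfin_good {n : ℕ} (h : Good ε n) :
    sfin ε n = (kk ε n : ℝ) * Real.sqrt (1 - (mm ε n : ℝ)⁻¹) := by
  rw [sfin, μfin_good h, Xfin_good h, mfin_good h, var_eq (by have := h.2.1; omega),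
    Real.sqrt_mul (by positivity), Real.sqrt_sq (by positivity)]

lemma sfin_bad {n : ℕ} (h : ¬ Good ε n) : sfin ε n = 0 := by
  rw [sfin, μfin_bad h, Xfin_bad h, mfin_bad h]
  simp

lemma mm_inv_le {n : ℕ} (h : Good ε n) : ((mm ε n : ℝ))⁻¹ ≤ 2⁻¹ := by
  have h2 : (2 : ℝ) ≤ (mm ε n : ℝ) := by exact_mod_cast h.2.1
  rw [inv_le_inv₀ (by linarith) (by norm_num)]
  exact h2

lemma sfin_tendsto (hεpos : ∀ n, 0 < ε n) (hε : Tendsto ε atTop (𝓝 0)) :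
    Tendsto (sfin ε) atTop atTop := by
  rw [tendsto_atTop]
  intro C
  filter_upwards [eventually_good hεpos hε,
    (kk_tendsto hεpos hε).eventually_ge_atTop (2 * ⌈max C 0⌉₊)] with n hg hk
  rw [sfin_good hg]
  have hs2 : Real.sqrt 2⁻¹ ≤ Real.sqrt (1 - (mm ε n : ℝ)⁻¹) :=
    Real.sqrt_le_sqrt (by linarith [mm_inv_le hg])
  have hhalf : (2 : ℝ)⁻¹ ≤ Real.sqrt 2⁻¹ :=
    (Real.le_sqrt (by norm_num) (by norm_num)).mpr (by norm_num)
  have hCle : C ≤ (⌈max C 0⌉₊ : ℝ) := (le_max_left C 0).trans (Nat.le_ceil _)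
  have hkR : (2 * ⌈max C 0⌉₊ : ℝ) ≤ (kk ε n : ℝ) := by exact_mod_cast hk
  have h0 : (0 : ℝ) ≤ (kk ε n : ℝ) := Nat.cast_nonneg _
  calc C ≤ (⌈max C 0⌉₊ : ℝ) := hCle
    _ ≤ (kk ε n : ℝ) * 2⁻¹ := by push_cast at hkR ⊢; linarith
    _ ≤ (kk ε n : ℝ) * Real.sqrt (1 - (mm ε n : ℝ)⁻¹) := by
        exact mul_le_mul_of_nonneg_left (hhalf.trans hs2) h0

lemma pgf_dirac (n : ℕ) :
    pgf (Measure.dirac (0 : ℝ)) (fun _ => (0 : ℝ)) n = C 1 := by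
  rw [pgf]
  rw [Finset.sum_eq_single_of_mem 0 (Finset.mem_range.mpr (Nat.succ_pos n))]
  · have : {ω : ℝ | (0 : ℝ) = ((0 : ℕ) : ℝ)} = Set.univ := by
      ext ω; simp
    rw [this]
    simp
  · intro i _ hi
    have : {ω : ℝ | (0 : ℝ) = ((i : ℕ) : ℝ)} = (∅ : Set ℝ) := by
      ext ω
      simp only [Set.mem_setOf_eq, Set.mem_empty_iff_false, iff_false]
      exact fun hc => hi (by exact_mod_cast hc.symm)
    rw [this]
    simp

lemma km_le {n : ℕ} : kk ε n * mm ε n ≤ n := by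
  rw [mm, mul_comm]
  exact Nat.div_mul_le_self n (kk ε n)

lemma roots_large {n : ℕ} (ζ : ℂ) (hζ : ζ ∈ (pgf (μfin ε n) (Xfin ε n) n).roots) :
    (n : ℝ) ^ (ε n) < ‖ζ‖ := by
  by_cases h : Good ε n
  · have hpgf : pgf (μfin ε n) (Xfin ε n) n
        = (C ((mm ε n : ℂ)⁻¹) * (X : Polynomial ℂ) ^ (kk ε n)
            + C (1 - (mm ε n : ℂ)⁻¹)) ^ (mm ε n) := by
      rw [μfin_good h, Xfin_good h, pgf_eq (by have := h.2.1; omega) km_le]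
    rw [hpgf] at hζ
    have habs : ‖ζ‖ ^ (kk ε n) = (mm ε n : ℝ) - 1 := root_abs h.2.1 hζ
    by_contra hle
    push_neg at hle
    have hpp := pow_le_pow_left₀ (norm_nonneg ζ) hle (kk ε n)
    rw [habs] at hpp
    exact absurd (lt_of_le_of_lt hpp h.2.2) (lt_irrefl _)
  · rw [μfin_bad h, Xfin_bad h, pgf_dirac] at hζ
    rw [roots_C] at hζ
    exact absurd hζ (Multiset.notMem_zero ζ)

lemma integral_bump_zero (n : ℕ) :
    ∫ ω, φ ((Xfin ε n ω - mfin ε n) / sfin ε n) ∂ (μfin ε n) = 0 := by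
  by_cases h : Good ε n
  · have hm1 : 1 ≤ mm ε n := by have := h.2.1; omega
    have htpos : 0 < Real.sqrt (1 - (mm ε n : ℝ)⁻¹) := Real.sqrt_pos.mpr (by
      have := mm_inv_le h; linarith)
    have ht1 : Real.sqrt (1 - (mm ε n : ℝ)⁻¹) ≤ 1 := by
      calc Real.sqrt (1 - (mm ε n : ℝ)⁻¹) ≤ Real.sqrt 1 := Real.sqrt_le_sqrt (by
            have : (0:ℝ) ≤ (mm ε n : ℝ)⁻¹ := by positivity
            linarith)
        _ = 1 := Real.sqrt_one
    set t : ℝ := Real.sqrt (1 - (mm ε n : ℝ)⁻¹) with htdef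
    have hkpos : (0 : ℝ) < (kk ε n : ℝ) := by exact_mod_cast h.1
    have hmeas : Measurable (fun ω =>
        φ ((Xg (kk ε n) (mm ε n) ω - (kk ε n : ℝ)) / ((kk ε n : ℝ) * t))) :=
      φ_cont.measurable.comp (((Xg_meas _ _).sub measurable_const).div_const _)
    rw [μfin_good h, Xfin_good h, mfin_good h, sfin_good h, ← htdef,
      integral_μg hm1 hmeas]
    refine Finset.sum_eq_zero fun j hj => mul_eq_zero_of_right _ ?_
    have hj' : j ≤ mm ε n := Nat.lt_succ_iff.mp (Finset.mem_range.mp hj)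
    beta_reduce
    rw [Xg_atom hj']
    show φ ((((kk ε n * j : ℕ) : ℝ) - (kk ε n : ℝ)) / ((kk ε n : ℝ) * t)) = 0
    match j with
    | 0 =>
      refine φ_zero_of_le (le_trans ?_ (by norm_num : (0:ℝ) ≤ 4⁻¹))
      apply div_nonpos_of_nonpos_of_nonneg
      · push_cast; linarith
      · positivity
    | 1 =>
      refine φ_zero_of_le ?_
      push_cast
      rw [mul_one, sub_self, zero_div]
      norm_num
    | (i + 2) =>
      refine φ_zero_of_ge ?_
      rw [le_div_iff₀ (by positivity)]
      have hi0 : (0:ℝ) ≤ (i : ℝ) := Nat.cast_nonneg i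
      push_cast
      nlinarith
  · rw [μfin_bad h, Xfin_bad h, mfin_bad h, sfin_bad h]
    have : φ ((0 - 0) / (0:ℝ)) = 0 := by
      rw [sub_zero, div_zero]
      exact φ_zero_of_le (by norm_num)
    simp only [this]
    simp

end NoCLTaux

/-- **Theorem 13 (sharpness of Theorem 3).**  For every function `ε : ℕ → (0,∞)` with
`ε n → 0`, there is a sequence of random variables `X n ∈ {0,…,n}` with `σ n → ∞`, all
roots of whose probability generating functions satisfy `|ζ| > n ^ ε n`, and which does
not satisfy a central limit theorem. -/
theorem no_clt_with_polynomially_large_roots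
    (ε : ℕ → ℝ) (hεpos : ∀ n, 0 < ε n) (hε : Tendsto ε atTop (𝓝 0)) :
    ∃ (μ : ℕ → Measure ℝ) (X : ℕ → ℝ → ℝ) (m s : ℕ → ℝ),
      (∀ n, IsProbabilityMeasure (μ n)) ∧
      (∀ n, Measurable (X n)) ∧
      (∀ n : ℕ, ∀ ω : ℝ, ∃ k : ℕ, k ≤ n ∧ X n ω = k) ∧
      (∀ n, m n = ∫ ω, X n ω ∂ μ n) ∧
      (∀ n, s n = Real.sqrt (∫ ω, (X n ω - m n) ^ 2 ∂ μ n)) ∧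
      Tendsto s atTop atTop ∧
      (∀ n : ℕ, ∀ ζ ∈ (pgf (μ n) (X n) n).roots, (n : ℝ) ^ (ε n) < ‖ζ‖) ∧
      ¬ SatisfiesCLT (fun _ => ℝ) μ X m s := by
  classical
  refine ⟨NoCLTaux.μfin ε, NoCLTaux.Xfin ε, NoCLTaux.mfin ε, NoCLTaux.sfin ε,
    ?_, ?_, ?_, fun n => rfl, fun n => rfl, NoCLTaux.sfin_tendsto hεpos hε,
    fun n ζ hζ => NoCLTaux.roots_large ζ hζ, ?_⟩
  · -- probability measures
    intro n
    by_cases h : NoCLTaux.Good ε n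
    · rw [NoCLTaux.μfin_good h]
      exact NoCLTaux.μg_isProb (by have := h.2.1; omega)
    · rw [NoCLTaux.μfin_bad h]
      infer_instance
  · -- measurable
    intro n
    by_cases h : NoCLTaux.Good ε n
    · rw [NoCLTaux.Xfin_good h]; exact NoCLTaux.Xg_meas _ _
    · rw [NoCLTaux.Xfin_bad h]; exact measurable_const
  · -- values in {0, …, n}
    intro n ω
    by_cases h : NoCLTaux.Good ε n
    · rw [NoCLTaux.Xfin_good h]
      refine ⟨NoCLTaux.kk ε n * min (NoCLTaux.mm ε n) ⌊ω⌋₊, ?_, rfl⟩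
      calc NoCLTaux.kk ε n * min (NoCLTaux.mm ε n) ⌊ω⌋₊
          ≤ NoCLTaux.kk ε n * NoCLTaux.mm ε n :=
            Nat.mul_le_mul_left _ (min_le_left _ _)
        _ ≤ n := NoCLTaux.km_le
    · rw [NoCLTaux.Xfin_bad h]
      exact ⟨0, Nat.zero_le n, by simp⟩
  · -- no CLT
    intro hCLT
    have hlim := hCLT NoCLTaux.fbump
    have hzero : ∀ n : ℕ,
        ∫ ω, NoCLTaux.fbump ((NoCLTaux.Xfin ε n ω - NoCLTaux.mfin ε n) / NoCLTaux.sfin ε n)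
          ∂ (NoCLTaux.μfin ε n) = 0 := by
      intro n
      have := NoCLTaux.integral_bump_zero (ε := ε) n
      simpa using this
    have hlim' : Tendsto (fun _ : ℕ => (0 : ℝ)) atTop
        (𝓝 (∫ x, NoCLTaux.fbump x ∂ (gaussianReal 0 1))) := Filter.Tendsto.congr hzero hlim
    have h0 : (∫ x, NoCLTaux.fbump x ∂ (gaussianReal 0 1)) = 0 :=
      tendsto_nhds_unique hlim' tendsto_const_nhds
    exact absurd h0 (ne_of_gt NoCLTaux.gauss_pos)
end

section
/- Let ℓ ∈ ℕ, let x_1, x_2, … ∈ ℝ^ℓ be a sequence that is nonzero for infinitely many indices, and let y_1, y_2, … ∈ ℝ^ℓ be a sequence such that every ℓ consecutive vectors y_{t+1}, …, y_{t+ℓ} are linearly independent. Then there exist an infinite set S ⊆ ℕ and a sequence of real numbers {B(m)}_{m≥1} such that: (1) for every m, lim_{n→∞, n∈S} (1/‖x_n‖)·|⟨x_n, y_m⟩ − ‖x_n‖·B(m)| = 0; (2) B(m) ≠ 0 for infinitely many m; and (3) |B(m)| ≤ ‖y_m‖ for every m. -/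
/-!
Normalise the nonzero `x n` to unit vectors; by compactness of the unit sphere a subsequence
converges to a unit vector `a`, and `B m := ⟪a, y m⟫` then satisfies (1) along that subsequence
and (3) by Cauchy–Schwarz. If `B m` vanished for all `m > t`, then `a` would be orthogonal to
the basis `y (t + 1), …, y (t + ℓ)` of `ℝ^ℓ`, forcing `a = 0`.
-/

open Filter Topology Set
open scoped RealInnerProductSpace

theorem StrictMono.map_atTop_eq_inf_principal_range {f : ℕ → ℕ} (hf : StrictMono f) :
    map f atTop = atTop ⊓ 𝓟 (range f) := by
  rw [← map_comap, comap_embedding_atTop (fun _ _ => hf.le_iff_le) fun c => ⟨c, hf.id_le c⟩]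

section InnerProductSpace

variable {E : Type*} [NormedAddCommGroup E] [InnerProductSpace ℝ E]

theorem one_div_norm_mul_abs_inner_sub_norm_mul {v : E} (hv : v ≠ 0) (w : E) (c : ℝ) :
    1 / ‖v‖ * |⟪v, w⟫ - ‖v‖ * c| = |⟪‖v‖⁻¹ • v, w⟫ - c| := by
  have hv : 0 < ‖v‖ := norm_pos_iff.mpr hv
  rw [real_inner_smul_left, ← abs_of_pos (one_div_pos.mpr hv), ← abs_mul]
  congr 1
  field_simp

theorem eq_zero_of_forall_inner_eq_zero_of_linearIndependent [FiniteDimensional ℝ E]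
    {ι : Type*} [Fintype ι] {v : ι → E} (hv : LinearIndependent ℝ v)
    (hcard : Fintype.card ι = Module.finrank ℝ E) {a : E} (ha : ∀ i, ⟪a, v i⟫ = 0) :
    a = 0 :=
  InnerProductSpace.ext_inner_right_basis (basisOfLinearIndependentOfCardEqFinrank' v hv hcard)
    fun i => by simpa using ha i

theorem infinite_setOf_inner_ne_zero [FiniteDimensional ℝ E] {ℓ : ℕ}
    (hℓ : Module.finrank ℝ E = ℓ) {y : ℕ → E}
    (hy : ∀ t : ℕ, LinearIndependent ℝ fun i : Fin ℓ => y (t + 1 + i)) {a : E} (ha : a ≠ 0) :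
    {m | ⟪a, y m⟫ ≠ 0}.Infinite := by
  refine infinite_of_forall_exists_gt fun t => ?_
  by_contra! hcon
  refine ha (eq_zero_of_forall_inner_eq_zero_of_linearIndependent (hy t) (by simp [hℓ]) ?_)
  intro i
  by_contra h
  have hle := hcon _ h
  omega

end InnerProductSpace

theorem exists_strictMono_tendsto_inv_norm_smul {E : Type*} [NormedAddCommGroup E]
    [NormedSpace ℝ E] [ProperSpace E] {x : ℕ → E} (hx : {n | x n ≠ 0}.Infinite) :
    ∃ f : ℕ → ℕ, StrictMono f ∧ (∀ k, x (f k) ≠ 0) ∧ ∃ a : E, ‖a‖ = 1 ∧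
      Tendsto (fun k => ‖x (f k)‖⁻¹ • x (f k)) atTop (𝓝 a) := by
  set e := Nat.nth fun n => x n ≠ 0
  have hxe : ∀ k, x (e k) ≠ 0 := Nat.nth_mem_of_infinite hx
  have hsphere : ∀ k, ‖x (e k)‖⁻¹ • x (e k) ∈ Metric.sphere (0 : E) 1 := fun k => by
    simp [norm_smul, hxe k]
  obtain ⟨a, ha, φ, hφ, hlim⟩ := (isCompact_sphere (0 : E) 1).tendsto_subseq hsphere
  exact ⟨e ∘ φ, (Nat.nth_strictMono hx).comp hφ, fun k => hxe (φ k), a, by simpa using ha, hlim⟩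

/-- **Lemma 15 (a dominant-term lemma from linear algebra).**  Let `x, y : ℕ → ℝ^ℓ` be
sequences of vectors such that `x n ≠ 0` for infinitely many `n` and every `ℓ` consecutive
vectors `y (t+1), …, y (t+ℓ)` are linearly independent.  Then there are an infinite set
`S ⊆ ℕ` and reals `B m` such that
(1) for every `m`, `(1/‖x n‖)·|⟨x n, y m⟩ - ‖x n‖·B m| → 0` as `n → ∞` along `S`;
(2) `B m ≠ 0` for infinitely many `m`; and (3) `|B m| ≤ ‖y m‖` for every `m`. -/
theorem dominant_term_lemma
    (ℓ : ℕ) (x y : ℕ → EuclideanSpace ℝ (Fin ℓ))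
    (hx : {n : ℕ | x n ≠ 0}.Infinite)
    (hy : ∀ t : ℕ, LinearIndependent ℝ (fun i : Fin ℓ => y (t + 1 + (i : ℕ)))) :
    ∃ S : Set ℕ, S.Infinite ∧ ∃ B : ℕ → ℝ,
      (∀ m : ℕ, Tendsto (fun n => (1 / ‖x n‖) * |⟪x n, y m⟫ - ‖x n‖ * B m|)
        (atTop ⊓ Filter.principal S) (𝓝 0)) ∧
      {m : ℕ | B m ≠ 0}.Infinite ∧
      (∀ m : ℕ, |B m| ≤ ‖y m‖) := by
  obtain ⟨f, hf, hxf, a, ha, hlim⟩ := exists_strictMono_tendsto_inv_norm_smul hx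
  have ha0 : a ≠ 0 := norm_ne_zero_iff.mp (ha ▸ one_ne_zero)
  refine ⟨range f, infinite_range_of_injective hf.injective, fun m => ⟪a, y m⟫, fun m => ?_,
    infinite_setOf_inner_ne_zero finrank_euclideanSpace_fin hy ha0,
    fun m => by simpa [ha] using abs_real_inner_le_norm a (y m)⟩
  rw [← hf.map_atTop_eq_inf_principal_range, tendsto_map'_iff]
  have hB := ((hlim.inner (tendsto_const_nhds (x := y m))).sub_const ⟪a, y m⟫).abs
  rw [sub_self, abs_zero] at hB
  exact hB.congr fun k => (one_div_norm_mul_abs_inner_sub_norm_mul (hxf k) _ _).symm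
end
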